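/- arXiv:2602.16690 — 4 statements merged into one kernel-verified Lean document; each statement's English description precedes it below -/
import Mathlib

section
/- Let m be a positive integer, let H_1,…,H_m be null hypotheses with set of true nulls I_0 = {j ∈ [m] : H_j is true} and m_0 = |I_0|, and let α, ε ∈ (0,1). Suppose (p_1,…,p_m) are valid p-values (P(p_j ≤ t) ≤ t for all t ∈ [0,1] whenever j ∈ I_0) and (p̃_1,…,p̃_m) are arbitrary [0,1]-valued random variables. If the random vector (p_1,…,p_m,p̃_1,…,p̃_m) ∈ ℝ^{2m} is positively regression dependent on I_0 with respect to (p_1,…,p_m), then the SynthBH procedure satisfies FDR = E[|R ∩ I_0| / max(|R|,1)] ≤ (m_0/m)·(α+ε). -/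
open MeasureTheory

noncomputable section

/-- The synthetic-powered p-value at level `δ`: `p̃^δ = p ∧ (p̃ ∨ (p − δ))`. -/
def sp (p pt δ : ℝ) : ℝ := min p (max pt (p - δ))

/-- The `k`-th smallest element (1-indexed) of a finite family of reals. -/
def kthSmallest {m : ℕ} (v : Fin m → ℝ) (k : ℕ) : ℝ :=
  (List.insertionSort (· ≤ ·) (List.ofFn v)).getD (k - 1) 0

/-- The vector of synthetic-powered p-values with rank-adaptive guardrail `δ = kε/m`. -/
def spVec (m : ℕ) (ε : ℝ) (p pt : Fin m → ℝ) (k : ℕ) : Fin m → ℝ :=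
  fun j => sp (p j) (pt j) (k * ε / m)

/-- The SynthBH rejection index `k* = max {k ∈ [m] : m·p̃_{(k)}^{kε/m}/k ≤ α}` (0 if none). -/
def kStar (m : ℕ) (α ε : ℝ) (p pt : Fin m → ℝ) : ℕ :=
  ((Finset.Icc 1 m).filter
    (fun k => (m : ℝ) * kthSmallest (spVec m ε p pt k) k / k ≤ α)).sup id

/-- The SynthBH rejection set `R = {j : p̃_j^{k*ε/m} ≤ p̃_{(k*)}^{k*ε/m}}` (∅ if `k* = 0`). -/
def rejSet (m : ℕ) (α ε : ℝ) (p pt : Fin m → ℝ) : Finset (Fin m) :=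
  if kStar m α ε p pt = 0 then ∅
  else Finset.univ.filter (fun j =>
    spVec m ε p pt (kStar m α ε p pt) j ≤
      kthSmallest (spVec m ε p pt (kStar m α ε p pt)) (kStar m α ε p pt))

/-- A set `A ⊆ ℝ^d` is increasing if `x ∈ A` and `x ⪯ y` coordinatewise imply `y ∈ A`. -/
def IncreasingSet {d : ℕ} (A : Set (Fin d → ℝ)) : Prop :=
  ∀ ⦃x y : Fin d → ℝ⦄, x ∈ A → (∀ i, x i ≤ y i) → y ∈ A

/-- `X` is positively regression dependent on `I` with respect to `Y`:
for every `k ∈ I` and every increasing set `A`, the map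
`x ↦ P(X ∈ A | Y_k ≤ x)` is nondecreasing on its domain `{x : P(Y_k ≤ x) > 0}`. -/
def PRDSOn {Ω : Type*} [MeasurableSpace Ω] (μ : Measure Ω)
    {d m : ℕ} (X : Ω → (Fin d → ℝ)) (Y : Fin m → Ω → ℝ) (I : Finset (Fin m)) : Prop :=
  ∀ k ∈ I, ∀ A : Set (Fin d → ℝ), IncreasingSet A →
    ∀ ⦃x y : ℝ⦄, x ≤ y → 0 < μ {ω | Y k ω ≤ x} →
      μ ({ω | X ω ∈ A} ∩ {ω | Y k ω ≤ x}) / μ {ω | Y k ω ≤ x} ≤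
        μ ({ω | X ω ∈ A} ∩ {ω | Y k ω ≤ y}) / μ {ω | Y k ω ≤ y}

/-! ### Auxiliary lemmas -/

lemma countP_ofFn' {n : ℕ} (f : Fin n → ℝ) (q : ℝ → Bool) :
    (List.ofFn f).countP q = (Finset.univ.filter (fun i => q (f i) = true)).card := by
  induction n with
  | zero => simp
  | succ n ih =>
    rw [List.ofFn_succ, List.countP_cons, ih (fun i => f i.succ)]
    rw [Finset.card_filter, Finset.card_filter, Fin.sum_univ_succ]
    simp [add_comm]

lemma countP_get' (l : List ℝ) (q : ℝ → Bool) :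
    l.countP q = (Finset.univ.filter (fun i : Fin l.length => q (l.get i) = true)).card := by
  conv_lhs => rw [← List.ofFn_get l]
  rw [countP_ofFn']

lemma sorted_getD_le_iff {l : List ℝ} (hs : l.Pairwise (· ≤ ·)) {k : ℕ}
    (hk1 : 1 ≤ k) (hkl : k ≤ l.length) (t : ℝ) :
    l.getD (k-1) 0 ≤ t ↔ k ≤ l.countP (fun x => decide (x ≤ t)) := by
  have hlt : k - 1 < l.length := by omega
  rw [l.getD_eq_getElem 0 hlt, countP_get']
  set S := Finset.univ.filter (fun i : Fin l.length => decide (l.get i ≤ t) = true) with hS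
  have key : ∀ i j : Fin l.length, i ≤ j → l.get i ≤ l.get j := by
    intro i j hij
    rcases eq_or_lt_of_le hij with he | hl
    · rw [he]
    · exact List.Pairwise.rel_get_of_lt hs hl
  constructor
  · intro h
    have : (Finset.range k).card ≤ S.card := by
      apply Finset.card_le_card_of_injOn (fun a => ⟨min a (k-1), by omega⟩)
      · intro a ha
        simp only [Finset.mem_coe, Finset.mem_range] at ha
        simp only [hS, Finset.mem_coe, Finset.mem_filter, Finset.mem_univ, true_and, decide_eq_true_eq]
        refine le_trans (key _ ⟨k-1, hlt⟩ ?_) h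
        simp [Fin.le_def]
      · intro a ha b hb hab
        simp only [Finset.mem_coe, Finset.mem_range] at ha hb
        have := congrArg Fin.val hab
        simp only at this
        omega
    simpa using this
  · intro h
    by_contra hc
    push_neg at hc
    have hsub : S ⊆ Finset.univ.filter (fun i : Fin l.length => (i : ℕ) < k - 1) := by
      intro i hi
      simp only [hS, Finset.mem_filter, Finset.mem_univ, true_and, decide_eq_true_eq] at hi ⊢
      by_contra hik
      push_neg at hik
      exact absurd (le_trans (key ⟨k-1, hlt⟩ i (by simpa [Fin.le_def] using hik)) hi)
        (not_le.mpr hc)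
    have hcard : S.card ≤ k - 1 := by
      have h2 : (Finset.univ.filter (fun i : Fin l.length => (i : ℕ) < k - 1)).card
          ≤ (Finset.range (k-1)).card := by
        refine Finset.card_le_card_of_injOn (fun i => (i : ℕ)) ?_ ?_
        · intro i hi; simp only [Finset.mem_coe, Finset.mem_filter] at hi; simp [hi.2]
        · intro a _ b _ hab; exact Fin.ext hab
      calc S.card ≤ _ := Finset.card_le_card hsub
        _ ≤ _ := h2
        _ = k - 1 := Finset.card_range _
    omega

lemma kthSmallest_le_iff {m : ℕ} (v : Fin m → ℝ) {k : ℕ} (hk1 : 1 ≤ k) (hkm : k ≤ m) (t : ℝ) :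
    kthSmallest v k ≤ t ↔ k ≤ (Finset.univ.filter (fun j => v j ≤ t)).card := by
  unfold kthSmallest
  rw [sorted_getD_le_iff (List.pairwise_insertionSort _ _) hk1
    (by rw [(List.perm_insertionSort _ _).length_eq, List.length_ofFn]; exact hkm)]
  rw [(List.perm_insertionSort (· ≤ ·) (List.ofFn v)).countP_eq, countP_ofFn']
  simp

lemma kthSmallest_mono {m : ℕ} {v w : Fin m → ℝ} (h : ∀ j, v j ≤ w j) {k : ℕ}
    (hk1 : 1 ≤ k) (hkm : k ≤ m) : kthSmallest v k ≤ kthSmallest w k := by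
  rw [kthSmallest_le_iff v hk1 hkm]
  refine le_trans ((kthSmallest_le_iff w hk1 hkm _).mp le_rfl) (Finset.card_le_card ?_)
  intro j hj
  simp only [Finset.mem_filter, Finset.mem_univ, true_and] at hj ⊢
  exact le_trans (h j) hj

lemma sp_mono {p pt p' pt' δ : ℝ} (h1 : p ≤ p') (h2 : pt ≤ pt') : sp p pt δ ≤ sp p' pt' δ := by
  unfold sp
  exact min_le_min h1 (max_le_max h2 (by linarith))

lemma sp_ge {p pt δ : ℝ} (hδ : 0 ≤ δ) : p - δ ≤ sp p pt δ :=
  le_min (by linarith) (le_max_of_le_right le_rfl)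

lemma kStar_spec {m : ℕ} {α ε : ℝ} {p pt : Fin m → ℝ} (h : kStar m α ε p pt ≠ 0) :
    1 ≤ kStar m α ε p pt ∧ kStar m α ε p pt ≤ m ∧
      (m : ℝ) * kthSmallest (spVec m ε p pt (kStar m α ε p pt)) (kStar m α ε p pt)
        / (kStar m α ε p pt) ≤ α := by
  set s := (Finset.Icc 1 m).filter
    (fun k => (m : ℝ) * kthSmallest (spVec m ε p pt k) k / k ≤ α) with hs
  have hne : s.Nonempty := by
    rw [Finset.nonempty_iff_ne_empty]
    intro he
    exact h (by rw [kStar, ← hs, he]; rfl)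
  obtain ⟨b, hb, hbs⟩ := Finset.exists_mem_eq_sup s hne id
  have hKb : kStar m α ε p pt = b := hbs
  rw [hKb]
  simp only [hs, Finset.mem_filter, Finset.mem_Icc] at hb
  exact ⟨hb.1.1, hb.1.2, hb.2⟩

lemma kStar_antitone {m : ℕ} (hm : 0 < m) {α ε : ℝ} {p pt p' pt' : Fin m → ℝ}
    (hp : ∀ j, p j ≤ p' j) (hpt : ∀ j, pt j ≤ pt' j) :
    kStar m α ε p' pt' ≤ kStar m α ε p pt := by
  apply Finset.sup_mono
  intro k hk
  simp only [Finset.mem_filter, Finset.mem_Icc] at hk ⊢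
  refine ⟨hk.1, le_trans ?_ hk.2⟩
  have hk1 := hk.1.1
  have hkm := hk.1.2
  have hmono : kthSmallest (spVec m ε p pt k) k ≤ kthSmallest (spVec m ε p' pt' k) k :=
    kthSmallest_mono (fun j => sp_mono (hp j) (hpt j)) hk1 hkm
  have hkpos : (0:ℝ) < k := by exact_mod_cast hk1
  gcongr

lemma cond_iff {m : ℕ} (hm : 0 < m) {α : ℝ} (ε : ℝ) (p pt : Fin m → ℝ) {k : ℕ}
    (hk1 : 1 ≤ k) (hkm : k ≤ m) :
    ((m : ℝ) * kthSmallest (spVec m ε p pt k) k / k ≤ α) ↔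
      k ≤ (Finset.univ.filter (fun j => spVec m ε p pt k j ≤ α * k / m)).card := by
  rw [← kthSmallest_le_iff _ hk1 hkm]
  rw [div_le_iff₀ (by exact_mod_cast hk1), le_div_iff₀ (by exact_mod_cast hm)]
  constructor <;> intro h <;> linarith

lemma rejSet_facts {m : ℕ} (hm : 0 < m) {α ε : ℝ} (hε0 : 0 ≤ ε) {p pt : Fin m → ℝ}
    (h : kStar m α ε p pt ≠ 0) :
    kStar m α ε p pt ≤ (rejSet m α ε p pt).card ∧
    ∀ j ∈ rejSet m α ε p pt, p j ≤ kStar m α ε p pt * (α+ε) / m := by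
  obtain ⟨h1, h2, h3⟩ := kStar_spec h
  have hm0 : (0:ℝ) < m := by exact_mod_cast hm
  have hK0 : (0:ℝ) < kStar m α ε p pt := by exact_mod_cast h1
  have hrej : rejSet m α ε p pt = Finset.univ.filter (fun j =>
      spVec m ε p pt (kStar m α ε p pt) j ≤
        kthSmallest (spVec m ε p pt (kStar m α ε p pt)) (kStar m α ε p pt)) := if_neg h
  have hkth : kthSmallest (spVec m ε p pt (kStar m α ε p pt)) (kStar m α ε p pt)
      ≤ α * kStar m α ε p pt / m := by
    rw [div_le_iff₀ hK0] at h3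
    rw [le_div_iff₀ hm0]
    linarith
  constructor
  · rw [hrej]
    exact (kthSmallest_le_iff _ h1 h2 _).mp le_rfl
  · intro j hj
    rw [hrej, Finset.mem_filter] at hj
    have hle := hj.2.trans hkth
    have hsp : p j - kStar m α ε p pt * ε / m ≤ spVec m ε p pt (kStar m α ε p pt) j :=
      sp_ge (by positivity)
    have hpj : p j ≤ α * kStar m α ε p pt / m + kStar m α ε p pt * ε / m := by linarith
    calc p j ≤ α * kStar m α ε p pt / m + kStar m α ε p pt * ε / m := hpj
      _ = kStar m α ε p pt * (α+ε) / m := by ring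

lemma pointwise_bound {m : ℕ} (hm : 0 < m) {α ε : ℝ} (hε0 : 0 ≤ ε)
    (p pt : Fin m → ℝ) (I0 : Finset (Fin m)) :
    ((rejSet m α ε p pt ∩ I0).card : ℝ) / ((max (rejSet m α ε p pt).card 1 : ℕ) : ℝ) ≤
      ∑ j ∈ I0, ∑ k ∈ Finset.Icc 1 m,
        (if p j ≤ k*(α+ε)/m ∧ kStar m α ε p pt = k then (1/(k:ℝ)) else 0) := by
  by_cases hK : kStar m α ε p pt = 0
  · rw [rejSet, if_pos hK]
    simp only [Finset.empty_inter, Finset.card_empty, Nat.cast_zero, zero_div]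
    apply Finset.sum_nonneg
    intro j _
    apply Finset.sum_nonneg
    intro k _
    split_ifs <;> positivity
  · obtain ⟨hcard, hple⟩ := rejSet_facts hm hε0 hK
    obtain ⟨h1, h2, _⟩ := kStar_spec hK
    have hN1 : 1 ≤ (rejSet m α ε p pt).card := le_trans h1 hcard
    have hmax : max (rejSet m α ε p pt).card 1 = (rejSet m α ε p pt).card :=
      Nat.max_eq_left hN1
    rw [hmax]
    have hKpos : (0:ℝ) < kStar m α ε p pt := by exact_mod_cast h1
    have hinter : ((rejSet m α ε p pt ∩ I0).card : ℝ) =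
        ∑ j ∈ I0, (if j ∈ rejSet m α ε p pt then (1:ℝ) else 0) := by
      rw [Finset.inter_comm, ← Finset.filter_mem_eq_inter, Finset.card_filter]
      push_cast
      rfl
    rw [hinter, Finset.sum_div]
    apply Finset.sum_le_sum
    intro j hj
    refine le_trans ?_ (Finset.single_le_sum
      (f := fun k : ℕ => if p j ≤ (k:ℝ)*(α+ε)/m ∧ kStar m α ε p pt = k then (1/(k:ℝ)) else 0)
      (fun k _ => by split_ifs <;> positivity) (Finset.mem_Icc.mpr ⟨h1, h2⟩))
    by_cases hjR : j ∈ rejSet m α ε p pt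
    · rw [if_pos hjR, if_pos ⟨hple j hjR, rfl⟩]
      apply one_div_le_one_div_of_le hKpos
      exact_mod_cast hcard
    · rw [if_neg hjR, zero_div]
      split_ifs <;> positivity

lemma perj_bound {Ω : Type*} [MeasurableSpace Ω] (μ : Measure Ω) [IsProbabilityMeasure μ]
    (m : ℕ) (hm : 0 < m) (q : ℝ) (hq0 : 0 < q)
    (X : Ω → ℝ) (hXmeas : Measurable X)
    (hvalid : ∀ t ∈ Set.Icc (0:ℝ) 1, μ {ω | X ω ≤ t} ≤ ENNReal.ofReal t)
    (D : ℕ → Set Ω) (hDmeas : ∀ n, MeasurableSet (D n))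
    (hDmono : ∀ n, D n ⊆ D (n+1))
    (hprds : ∀ n, ∀ x y : ℝ, x ≤ y → 0 < μ {ω | X ω ≤ x} →
      μ (D n ∩ {ω | X ω ≤ x}) / μ {ω | X ω ≤ x} ≤ μ (D n ∩ {ω | X ω ≤ y}) / μ {ω | X ω ≤ y}) :
    ∑ k ∈ Finset.Icc 1 m, (1/(k:ℝ)) * (μ ({ω | X ω ≤ k*q/m} ∩ (D k \ D (k-1)))).toReal ≤ q/m := by
  have hm0 : (0:ℝ) < m := by exact_mod_cast hm
  set c : ℕ → ℝ := fun k => k*q/m with hc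
  set T : ℕ → Set Ω := fun k => {ω | X ω ≤ c k} with hT
  set F : ℕ → ℝ := fun k => (μ (T k)).toReal with hF
  set b : ℕ → ℝ := fun k => (μ (T k ∩ D k)).toReal with hb
  set r : ℕ → ℝ := fun k => b k / F k with hr
  have hfin : ∀ s : Set Ω, μ s ≠ ⊤ := fun s => measure_ne_top μ s
  have hc0 : ∀ k, 0 ≤ c k := fun k => by positivity
  have hcmono : Monotone c := by
    intro a a' haa
    simp only [hc]
    gcongr
  have hTsub : ∀ {k k' : ℕ}, k ≤ k' → T k ⊆ T k' := by
    intro k k' hkk ω hω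
    exact le_trans hω (hcmono hkk)
  have hDsub : ∀ {k k' : ℕ}, k ≤ k' → D k ⊆ D k' := by
    intro k k' hkk
    induction k' with
    | zero => rw [Nat.le_zero.mp hkk]
    | succ n ih =>
      rcases Nat.lt_or_ge k (n+1) with h | h
      · exact (ih (by omega)).trans (hDmono n)
      · rw [Nat.le_antisymm hkk h]
  have hF_le_c : ∀ k, F k ≤ c k := by
    intro k
    rcases le_or_gt (c k) 1 with h | h
    · have := hvalid (c k) ⟨hc0 k, h⟩
      calc F k ≤ (ENNReal.ofReal (c k)).toReal := ENNReal.toReal_mono (by simp) this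
        _ = c k := ENNReal.toReal_ofReal (hc0 k)
    · calc F k ≤ (μ Set.univ).toReal := ENNReal.toReal_mono (hfin _) (measure_mono (Set.subset_univ _))
        _ = 1 := by simp
        _ ≤ c k := le_of_lt h
  have hF0 : ∀ k, 0 ≤ F k := fun k => ENNReal.toReal_nonneg
  have hb0 : ∀ k, 0 ≤ b k := fun k => ENNReal.toReal_nonneg
  have hbF : ∀ k, b k ≤ F k := fun k =>
    ENNReal.toReal_mono (hfin _) (measure_mono Set.inter_subset_left)
  have hr0 : ∀ k, 0 ≤ r k := fun k => div_nonneg (hb0 k) (hF0 k)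
  have hr1 : ∀ k, r k ≤ 1 := by
    intro k
    by_cases hFk : F k = 0
    · simp only [hr, hFk, div_zero]; norm_num
    · exact div_le_one_of_le₀ (hbF k) (hF0 k)
  have key : ∀ k : ℕ, 1 ≤ k → F k * r (k-1) ≤ (μ (T k ∩ D (k-1))).toReal := by
    intro k hk1
    by_cases hprev : μ (T (k-1)) = 0
    · have hbz : b (k-1) = 0 := by
        simp only [hb]
        rw [le_antisymm (le_trans (measure_mono Set.inter_subset_left) (le_of_eq hprev)) zero_le]
        simp
      simp only [hr, hbz, zero_div, mul_zero]
      exact ENNReal.toReal_nonneg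
    · have hpos : 0 < μ (T (k-1)) := lt_of_le_of_ne zero_le (Ne.symm hprev)
      have h := hprds (k-1) (c (k-1)) (c k) (hcmono (Nat.sub_le k 1)) hpos
      have hTkpos : 0 < μ (T k) := lt_of_lt_of_le hpos (measure_mono (hTsub (Nat.sub_le k 1)))
      have hrhs_fin : μ (D (k-1) ∩ T k) / μ (T k) ≠ ⊤ :=
        ne_of_lt (ENNReal.div_lt_top (hfin _) (ne_of_gt hTkpos))
      have hreal := ENNReal.toReal_mono hrhs_fin h
      rw [ENNReal.toReal_div, ENNReal.toReal_div] at hreal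
      have e1 : (μ (D (k-1) ∩ T (k-1))).toReal = b (k-1) := by rw [Set.inter_comm]
      have e2 : (μ (D (k-1) ∩ T k)).toReal = (μ (T k ∩ D (k-1))).toReal := by rw [Set.inter_comm]
      rw [e1, e2] at hreal
      have hFkpos : 0 < F k := ENNReal.toReal_pos (ne_of_gt hTkpos) (hfin _)
      calc F k * r (k-1) ≤ F k * ((μ (T k ∩ D (k-1))).toReal / F k) := by
            apply mul_le_mul_of_nonneg_left hreal (hF0 k)
        _ = (μ (T k ∩ D (k-1))).toReal := by field_simp
  have hrmono : ∀ k : ℕ, 1 ≤ k → r (k-1) ≤ r k := by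
    intro k hk1
    by_cases hFk : F k = 0
    · have hμTk : μ (T k) = 0 := by
        rcases (ENNReal.toReal_eq_zero_iff _).mp hFk with h | h
        · exact h
        · exact absurd h (hfin _)
      have hbz : b (k-1) = 0 := by
        simp only [hb]
        rw [le_antisymm (le_trans (measure_mono
          (Set.inter_subset_left.trans (hTsub (Nat.sub_le k 1)))) (le_of_eq hμTk)) zero_le]
        simp
      simp only [hr, hbz, zero_div]
      exact hr0 k
    · have hFkpos : 0 < F k := lt_of_le_of_ne (hF0 k) (Ne.symm hFk)
      have h1 := key k hk1
      have h2 : (μ (T k ∩ D (k-1))).toReal ≤ b k :=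
        ENNReal.toReal_mono (hfin _)
          (measure_mono (Set.inter_subset_inter_right _ (hDsub (Nat.sub_le k 1))))
      rw [hr, le_div_iff₀ hFkpos]
      calc r (k-1) * F k = F k * r (k-1) := mul_comm _ _
        _ ≤ b k := le_trans h1 h2
  have hterm : ∀ k : ℕ, 1 ≤ k → (μ (T k ∩ (D k \ D (k-1)))).toReal ≤ F k * (r k - r (k-1)) := by
    intro k hk1
    have hsub : T k ∩ D (k-1) ⊆ T k ∩ D k :=
      Set.inter_subset_inter_right _ (hDsub (Nat.sub_le k 1))
    have hsplit : (μ (T k ∩ (D k \ D (k-1)))).toReal = b k - (μ (T k ∩ D (k-1))).toReal := by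
      have e : T k ∩ (D k \ D (k-1)) = (T k ∩ D k) \ (T k ∩ D (k-1)) := by
        ext ω; simp only [Set.mem_inter_iff, Set.mem_diff]; tauto
      rw [e, measure_diff hsub
        (((measurableSet_le hXmeas measurable_const).inter (hDmeas (k-1))).nullMeasurableSet) (hfin _),
        ENNReal.toReal_sub_of_le (measure_mono hsub) (hfin _)]
    rw [hsplit]
    by_cases hFk : F k = 0
    · have hμTk : μ (T k) = 0 := by
        rcases (ENNReal.toReal_eq_zero_iff _).mp hFk with h | h
        · exact h
        · exact absurd h (hfin _)
      have hbz : b k = 0 := by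
        simp only [hb]
        rw [le_antisymm (le_trans (measure_mono Set.inter_subset_left) (le_of_eq hμTk)) zero_le]
        simp
      rw [hbz, hFk]
      simp only [zero_mul, zero_sub, neg_nonpos]
      linarith [ENNReal.toReal_nonneg (a := μ (T k ∩ D (k-1)))]
    · have hFkpos : 0 < F k := lt_of_le_of_ne (hF0 k) (Ne.symm hFk)
      have hbk : b k = F k * r k := by
        rw [hr]; field_simp
      have := key k hk1
      linarith
  calc ∑ k ∈ Finset.Icc 1 m, (1/(k:ℝ)) * (μ (T k ∩ (D k \ D (k-1)))).toReal
      ≤ ∑ k ∈ Finset.Icc 1 m, (q/m) * (r k - r (k-1)) := by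
        apply Finset.sum_le_sum
        intro k hk
        simp only [Finset.mem_Icc] at hk
        have hk1 := hk.1
        have hkpos : (0:ℝ) < k := by exact_mod_cast hk1
        have hΔ : 0 ≤ r k - r (k-1) := by linarith [hrmono k hk1]
        calc (1/(k:ℝ)) * (μ (T k ∩ (D k \ D (k-1)))).toReal
            ≤ (1/(k:ℝ)) * (F k * (r k - r (k-1))) := by
              apply mul_le_mul_of_nonneg_left (hterm k hk1) (by positivity)
          _ ≤ (1/(k:ℝ)) * (c k * (r k - r (k-1))) := by
              apply mul_le_mul_of_nonneg_left
                (mul_le_mul_of_nonneg_right (hF_le_c k) hΔ) (by positivity)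
          _ = (q/m) * (r k - r (k-1)) := by
              simp only [hc]
              field_simp
    _ = (q/m) * (r m - r 0) := by
        rw [← Finset.mul_sum]
        congr 1
        rw [← Finset.Ico_add_one_right_eq_Icc, Finset.sum_Ico_eq_sum_range]
        simp only [Nat.add_sub_cancel_left, Nat.succ_sub_one, Nat.add_sub_cancel]
        have e : ∀ x ∈ Finset.range m, r (1+x) - r x = r (x+1) - r x := fun x _ => by rw [add_comm]
        rw [Finset.sum_congr rfl e, Finset.sum_range_sub r]
    _ ≤ q/m := by
        have h1 : r m - r 0 ≤ 1 := by linarith [hr1 m, hr0 0]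
        have h2 : (0:ℝ) ≤ q/m := by positivity
        calc (q/m) * (r m - r 0) ≤ (q/m) * 1 := mul_le_mul_of_nonneg_left h1 h2
          _ = q/m := mul_one _

/-- **SynthBH controls the FDR.**  If the real p-values are valid for the true nulls and
`(p_1,…,p_m,p̃_1,…,p̃_m)` is positively regression dependent on the set of true nulls `I₀`
with respect to `(p_1,…,p_m)`, then SynthBH satisfies
`FDR = E[|R ∩ I₀| / max(|R|,1)] ≤ (m₀/m)·(α+ε)`. -/
theorem synthBH_controls_FDR
    {Ω : Type*} [MeasurableSpace Ω] (μ : Measure Ω) [IsProbabilityMeasure μ]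
    (m : ℕ) (hm : 0 < m) (α ε : ℝ) (hα : α ∈ Set.Ioo (0 : ℝ) 1) (hε : ε ∈ Set.Ioo (0 : ℝ) 1)
    (p pt : Fin m → Ω → ℝ)
    (hpmeas : ∀ j, Measurable (p j)) (hptmeas : ∀ j, Measurable (pt j))
    (hp01 : ∀ j ω, p j ω ∈ Set.Icc (0 : ℝ) 1) (hpt01 : ∀ j ω, pt j ω ∈ Set.Icc (0 : ℝ) 1)
    (I0 : Finset (Fin m))
    (hvalid : ∀ j ∈ I0, ∀ t ∈ Set.Icc (0 : ℝ) 1, μ {ω | p j ω ≤ t} ≤ ENNReal.ofReal t)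
    (hprds : PRDSOn μ (fun ω => Fin.append (fun j => p j ω) (fun j => pt j ω)) p I0) :
    ∫ ω, ((rejSet m α ε (fun j => p j ω) (fun j => pt j ω) ∩ I0).card : ℝ) /
        ((max (rejSet m α ε (fun j => p j ω) (fun j => pt j ω)).card 1 : ℕ) : ℝ) ∂μ ≤
      ((I0.card : ℝ) / m) * (α + ε) := by
  obtain ⟨hα0, hα1⟩ := hα
  obtain ⟨hε0, hε1⟩ := hε
  have hm0 : (0:ℝ) < m := by exact_mod_cast hm
  -- abbreviations
  set ks : Ω → ℕ := fun ω => kStar m α ε (fun j => p j ω) (fun j => pt j ω) with hks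
  set Dn : ℕ → Set Ω := fun n => {ω | ks ω ≤ n} with hDn
  -- measurability of the coordinates of spVec
  have hspm : ∀ (k : ℕ) (i : Fin m),
      Measurable (fun ω => spVec m ε (fun l => p l ω) (fun l => pt l ω) k i) := by
    intro k i
    simp only [spVec, sp]
    exact (hpmeas i).min ((hptmeas i).max ((hpmeas i).sub measurable_const))
  -- measurability of the BH condition events
  have hCmeas : ∀ k : ℕ, 1 ≤ k → k ≤ m → MeasurableSet {ω |
      (m:ℝ) * kthSmallest (spVec m ε (fun l => p l ω) (fun l => pt l ω) k) k / k ≤ α} := by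
    intro k hk1 hkm
    have he : {ω | (m:ℝ) * kthSmallest (spVec m ε (fun l => p l ω) (fun l => pt l ω) k) k / k ≤ α}
        = {ω | k ≤ (Finset.univ.filter (fun i =>
            spVec m ε (fun l => p l ω) (fun l => pt l ω) k i ≤ α * k / m)).card} := by
      ext ω
      exact cond_iff hm ε _ _ hk1 hkm
    rw [he]
    have hfm : Measurable (fun ω => (Finset.univ.filter (fun i =>
        spVec m ε (fun l => p l ω) (fun l => pt l ω) k i ≤ α * k / m)).card) := by
      have he2 : (fun ω => (Finset.univ.filter (fun i =>
          spVec m ε (fun l => p l ω) (fun l => pt l ω) k i ≤ α * k / m)).card)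
          = fun ω => ∑ i : Fin m, if spVec m ε (fun l => p l ω) (fun l => pt l ω) k i ≤ α * k / m
              then 1 else 0 := by
        funext ω
        rw [Finset.card_filter]
      rw [he2]
      apply Finset.measurable_sum
      intro i _
      exact Measurable.ite (measurableSet_le (hspm k i) measurable_const)
        measurable_const measurable_const
    exact hfm (show MeasurableSet (Set.Ici k) from MeasurableSpace.measurableSet_top)
  -- measurability of the events {k* ≤ n}
  have hDeq : ∀ n, Dn n = ⋂ k ∈ Finset.Icc 1 m, {ω |
      ((m:ℝ) * kthSmallest (spVec m ε (fun l => p l ω) (fun l => pt l ω) k) k / k ≤ α)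
        → k ≤ n} := by
    intro n
    ext ω
    simp only [hDn, hks, Set.mem_iInter, Set.mem_setOf_eq]
    constructor
    · intro h k hk hcond
      exact le_trans (Finset.le_sup (f := id) (Finset.mem_filter.mpr ⟨hk, hcond⟩)) h
    · intro h
      apply Finset.sup_le
      intro bk hbk
      rw [Finset.mem_filter] at hbk
      exact h bk hbk.1 hbk.2
  have hDmeas : ∀ n, MeasurableSet (Dn n) := by
    intro n
    rw [hDeq n]
    apply Finset.measurableSet_biInter
    intro k hk
    rw [Finset.mem_Icc] at hk
    by_cases hkn : k ≤ n
    · have : {ω : Ω |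
          ((m:ℝ) * kthSmallest (spVec m ε (fun l => p l ω) (fun l => pt l ω) k) k / k ≤ α)
            → k ≤ n} = Set.univ := by
        ext ω; simp [hkn]
      rw [this]
      exact MeasurableSet.univ
    · have : {ω : Ω |
          ((m:ℝ) * kthSmallest (spVec m ε (fun l => p l ω) (fun l => pt l ω) k) k / k ≤ α)
            → k ≤ n} = {ω : Ω |
          (m:ℝ) * kthSmallest (spVec m ε (fun l => p l ω) (fun l => pt l ω) k) k / k ≤ α}ᶜ := by
        ext ω; simp [hkn]
      rw [this]
      exact (hCmeas k hk.1 hk.2).compl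
  have hDnmono : ∀ n, Dn n ⊆ Dn (n+1) := by
    intro n ω hω
    exact le_trans hω (Nat.le_succ n)
  -- transfer of the PRDS hypothesis
  have hprds' : ∀ j ∈ I0, ∀ n : ℕ, ∀ x y : ℝ, x ≤ y → 0 < μ {ω | p j ω ≤ x} →
      μ (Dn n ∩ {ω | p j ω ≤ x}) / μ {ω | p j ω ≤ x} ≤
        μ (Dn n ∩ {ω | p j ω ≤ y}) / μ {ω | p j ω ≤ y} := by
    intro j hj n x y hxy hpos
    have hAinc : IncreasingSet {z : Fin (m+m) → ℝ |
        kStar m α ε (fun i => z (Fin.castAdd m i)) (fun i => z (Fin.natAdd m i)) ≤ n} := by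
      intro x' y' hx' hxy'
      exact le_trans (kStar_antitone hm (fun i => hxy' _) (fun i => hxy' _)) hx'
    have hXA : {ω | (Fin.append (fun i => p i ω) (fun i => pt i ω)) ∈
        {z : Fin (m+m) → ℝ |
          kStar m α ε (fun i => z (Fin.castAdd m i)) (fun i => z (Fin.natAdd m i)) ≤ n}}
        = Dn n := by
      ext ω
      simp only [Set.mem_setOf_eq, hDn, hks, Fin.append_left, Fin.append_right]
    have h := hprds j hj _ hAinc hxy hpos
    rw [hXA] at h
    exact h
  -- per-hypothesis bound
  have perj : ∀ j ∈ I0, ∑ k ∈ Finset.Icc 1 m,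
      (1/(k:ℝ)) * (μ ({ω | p j ω ≤ k*(α+ε)/m} ∩ (Dn k \ Dn (k-1)))).toReal ≤ (α+ε)/m :=
    fun j hj => perj_bound μ m hm (α+ε) (by linarith) (p j) (hpmeas j) (hvalid j hj)
      Dn hDmeas hDnmono (hprds' j hj)
  -- the dominating function
  set A : Fin m → ℕ → Set Ω := fun j k =>
    {ω | p j ω ≤ (k:ℝ)*(α+ε)/m} ∩ (Dn k \ Dn (k-1)) with hA
  have hAmeas : ∀ j k, MeasurableSet (A j k) := fun j k =>
    (measurableSet_le (hpmeas j) measurable_const).inter ((hDmeas k).diff (hDmeas (k-1)))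
  set g : Ω → ℝ := fun ω => ∑ j ∈ I0, ∑ k ∈ Finset.Icc 1 m,
    Set.indicator (A j k) (fun _ => 1/(k:ℝ)) ω with hg
  have hgint : Integrable g μ := by
    apply integrable_finset_sum
    intro j _
    apply integrable_finset_sum
    intro k _
    exact (integrable_const _).indicator (hAmeas j k)
  have hg_nonneg : ∀ ω, 0 ≤ g ω := by
    intro ω
    apply Finset.sum_nonneg
    intro j _
    apply Finset.sum_nonneg
    intro k _
    exact Set.indicator_nonneg (fun _ _ => by positivity) ω
  -- pointwise domination
  have hfg : ∀ ω, ((rejSet m α ε (fun j => p j ω) (fun j => pt j ω) ∩ I0).card : ℝ) /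
      ((max (rejSet m α ε (fun j => p j ω) (fun j => pt j ω)).card 1 : ℕ) : ℝ) ≤ g ω := by
    intro ω
    refine le_trans (pointwise_bound hm (le_of_lt hε0) _ _ I0) ?_
    apply Finset.sum_le_sum
    intro j _
    apply Finset.sum_le_sum
    intro k hk
    rw [Finset.mem_Icc] at hk
    rw [Set.indicator_apply]
    apply le_of_eq
    have hiff2 : ((fun j => p j ω) j ≤ (k:ℝ)*(α+ε)/m ∧
        kStar m α ε (fun j => p j ω) (fun j => pt j ω) = k) ↔ ω ∈ A j k := by
      simp only [hA, Set.mem_inter_iff, Set.mem_diff, hDn, hks, Set.mem_setOf_eq]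
      constructor
      · rintro ⟨h1, h2⟩
        exact ⟨h1, by omega, by omega⟩
      · rintro ⟨h1, h2, h3⟩
        exact ⟨h1, by omega⟩
    exact if_congr hiff2 rfl rfl
  -- computing the integral of the dominating function
  have hint : ∫ ω, g ω ∂μ = ∑ j ∈ I0, ∑ k ∈ Finset.Icc 1 m,
      (μ (A j k)).toReal * (1/(k:ℝ)) := by
    rw [hg, integral_finset_sum _ (fun j _ => integrable_finset_sum _
      (fun k _ => (integrable_const _).indicator (hAmeas j k)))]
    refine Finset.sum_congr rfl (fun j _ => ?_)
    rw [integral_finset_sum _ (fun k _ => (integrable_const _).indicator (hAmeas j k))]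
    refine Finset.sum_congr rfl (fun k _ => ?_)
    rw [integral_indicator_const _ (hAmeas j k)]
    simp [smul_eq_mul, measureReal_def]
  -- conclusion
  have hle : ∫ ω, ((rejSet m α ε (fun j => p j ω) (fun j => pt j ω) ∩ I0).card : ℝ) /
      ((max (rejSet m α ε (fun j => p j ω) (fun j => pt j ω)).card 1 : ℕ) : ℝ) ∂μ
      ≤ ∫ ω, g ω ∂μ := by
    by_cases hInt : Integrable (fun ω =>
      ((rejSet m α ε (fun j => p j ω) (fun j => pt j ω) ∩ I0).card : ℝ) /
      ((max (rejSet m α ε (fun j => p j ω) (fun j => pt j ω)).card 1 : ℕ) : ℝ)) μ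
    · exact integral_mono hInt hgint (fun ω => hfg ω)
    · rw [integral_undef hInt]
      exact integral_nonneg hg_nonneg
  refine le_trans hle ?_
  rw [hint]
  calc ∑ j ∈ I0, ∑ k ∈ Finset.Icc 1 m, (μ (A j k)).toReal * (1/(k:ℝ))
      = ∑ j ∈ I0, ∑ k ∈ Finset.Icc 1 m, (1/(k:ℝ)) * (μ (A j k)).toReal := by
        refine Finset.sum_congr rfl (fun j _ => Finset.sum_congr rfl (fun k _ => mul_comm _ _))
    _ ≤ ∑ j ∈ I0, (α+ε)/m := Finset.sum_le_sum (fun j hj => perj j hj)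
    _ = (I0.card : ℝ) * ((α+ε)/m) := by rw [Finset.sum_const, nsmul_eq_mul]
    _ = ((I0.card : ℝ) / m) * (α + ε) := by ring


end
end

section
/- Let X be a random vector in ℝ^n, W a real-valued random variable, and A ⊆ ℝ^n a fixed measurable set. If the function x ↦ P(X ∈ A | W = x) is nondecreasing (as a version of the conditional probability given W), then the function x ↦ P(X ∈ A | W ≤ x) is also nondecreasing on {x : P(W ≤ x) > 0}. -/
open MeasureTheory

/-- If `x ↦ P(X ∈ A | W = x)` (a version `h` of the conditional probability given `W`)
is nondecreasing, then `x ↦ P(X ∈ A | W ≤ x)` is nondecreasing on `{x : P(W ≤ x) > 0}`,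
where `P(X ∈ A | W ≤ x) = P(X ∈ A, W ≤ x)/P(W ≤ x)`. -/
theorem cond_prob_le_monotone_of_cond_prob_eq_monotone
    {Ω : Type*} [MeasurableSpace Ω] (μ : Measure Ω) [IsProbabilityMeasure μ]
    {n : ℕ} (X : Ω → (Fin n → ℝ)) (W : Ω → ℝ)
    (hX : Measurable X) (hW : Measurable W)
    (A : Set (Fin n → ℝ)) (hA : MeasurableSet A)
    (h : ℝ → ℝ) (hmeas : Measurable h) (hmono : Monotone h)
    (hver : μ[(fun ω => A.indicator (fun _ => (1 : ℝ)) (X ω)) |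
        MeasurableSpace.comap W inferInstance] =ᵐ[μ] fun ω => h (W ω)) :
    ∀ ⦃x y : ℝ⦄, x ≤ y → 0 < μ {ω | W ω ≤ x} →
      μ ({ω | X ω ∈ A} ∩ {ω | W ω ≤ x}) / μ {ω | W ω ≤ x} ≤
        μ ({ω | X ω ∈ A} ∩ {ω | W ω ≤ y}) / μ {ω | W ω ≤ y} := by
  intro x y hxy hpos
  have hB : MeasurableSet (X ⁻¹' A) := hX hA
  have hm : MeasurableSpace.comap W inferInstance ≤ ‹MeasurableSpace Ω› := hW.comap_le
  have hf_eq : (fun ω => A.indicator (fun _ => (1:ℝ)) (X ω))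
      = (X ⁻¹' A).indicator (fun _ => (1:ℝ)) := by
    funext ω
    by_cases hω : X ω ∈ A <;> simp [hω]
  have hf_int : Integrable (fun ω => A.indicator (fun _ => (1:ℝ)) (X ω)) μ := by
    rw [hf_eq]; exact (integrable_const (1:ℝ)).indicator hB
  have hhW_int : Integrable (fun ω => h (W ω)) μ := (integrable_condExp).congr hver
  have hsm : ∀ z : ℝ, MeasurableSet {ω | W ω ≤ z} := fun z => hW measurableSet_Iic
  -- key identity
  have key : ∀ z : ℝ, (μ (X ⁻¹' A ∩ {ω | W ω ≤ z})).toReal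
      = ∫ ω in {ω | W ω ≤ z}, h (W ω) ∂μ := by
    intro z
    have hsz : MeasurableSet[MeasurableSpace.comap W inferInstance] {ω | W ω ≤ z} :=
      ⟨Set.Iic z, measurableSet_Iic, rfl⟩
    have h1 : ∫ ω in {ω | W ω ≤ z}, A.indicator (fun _ => (1:ℝ)) (X ω) ∂μ
        = ∫ ω in {ω | W ω ≤ z}, h (W ω) ∂μ := by
      rw [← setIntegral_condExp hm hf_int hsz]
      exact integral_congr_ae (ae_restrict_of_ae hver)
    rw [← h1]
    have h2 : ∫ ω in {ω | W ω ≤ z}, A.indicator (fun _ => (1:ℝ)) (X ω) ∂μ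
        = ∫ ω in {ω | W ω ≤ z}, (X ⁻¹' A).indicator (fun _ => (1:ℝ)) ω ∂μ := by
      rw [hf_eq]
    rw [h2, setIntegral_indicator hB, setIntegral_const, smul_eq_mul, mul_one,
      Set.inter_comm]
    rfl
  -- notation
  set sx := {ω | W ω ≤ x} with hsx
  set sy := {ω | W ω ≤ y} with hsy
  have hss : sx ⊆ sy := fun ω hω => le_trans hω hxy
  have hfinx : μ sx ≠ ⊤ := measure_ne_top μ _
  have hfiny : μ sy ≠ ⊤ := measure_ne_top μ _
  have hFx : (0:ℝ) < (μ sx).toReal := ENNReal.toReal_pos hpos.ne' hfinx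
  have hFy : (0:ℝ) < (μ sy).toReal :=
    lt_of_lt_of_le hFx (ENNReal.toReal_mono hfiny (measure_mono hss))
  -- decomposition of measures
  have hdiff : MeasurableSet (sy \ sx) := (hsm y).diff (hsm x)
  have hFadd : (μ sy).toReal = (μ sx).toReal + (μ (sy \ sx)).toReal := by
    rw [← ENNReal.toReal_add hfinx (measure_ne_top μ _), measure_add_diff (hsm x).nullMeasurableSet sy,
      Set.union_eq_right.mpr hss]
  -- decomposition of integrals
  have hGadd : ∫ ω in sy, h (W ω) ∂μ
      = (∫ ω in sx, h (W ω) ∂μ) + ∫ ω in sy \ sx, h (W ω) ∂μ := by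
    rw [← setIntegral_union (Set.disjoint_sdiff_right) hdiff
      hhW_int.integrableOn hhW_int.integrableOn, Set.union_diff_cancel hss]
  -- bounds
  have hbound1 : ∫ ω in sx, h (W ω) ∂μ ≤ h x * (μ sx).toReal := by
    have : ∫ ω in sx, h (W ω) ∂μ ≤ ∫ _ω in sx, h x ∂μ := by
      apply setIntegral_mono_on hhW_int.integrableOn
        (integrableOn_const (measure_ne_top μ _)) (hsm x)
      intro ω hω; exact hmono hω
    simpa [setIntegral_const, smul_eq_mul, mul_comm, Measure.real] using this
  have hbound2 : h x * (μ (sy \ sx)).toReal ≤ ∫ ω in sy \ sx, h (W ω) ∂μ := by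
    have : ∫ _ω in sy \ sx, h x ∂μ ≤ ∫ ω in sy \ sx, h (W ω) ∂μ := by
      apply setIntegral_mono_on (integrableOn_const (measure_ne_top μ _))
        hhW_int.integrableOn hdiff
      intro ω hω
      exact hmono (le_of_lt (lt_of_not_ge hω.2))
    simpa [setIntegral_const, smul_eq_mul, mul_comm, Measure.real] using this
  have hGx0 : (0:ℝ) ≤ (μ (X ⁻¹' A ∩ sx)).toReal := ENNReal.toReal_nonneg
  have hD0 : (0:ℝ) ≤ (μ (sy \ sx)).toReal := ENNReal.toReal_nonneg
  -- the real inequality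
  have hGfinx : μ (X ⁻¹' A ∩ sx) ≠ ⊤ := measure_ne_top μ _
  have hGfiny : μ (X ⁻¹' A ∩ sy) ≠ ⊤ := measure_ne_top μ _
  have hreal : (μ (X ⁻¹' A ∩ sx)).toReal / (μ sx).toReal
      ≤ (μ (X ⁻¹' A ∩ sy)).toReal / (μ sy).toReal := by
    rw [div_le_div_iff₀ hFx hFy]
    have hcross : (μ (X ⁻¹' A ∩ sx)).toReal * (μ (sy \ sx)).toReal
        ≤ (∫ ω in sy \ sx, h (W ω) ∂μ) * (μ sx).toReal := by
      calc (μ (X ⁻¹' A ∩ sx)).toReal * (μ (sy \ sx)).toReal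
          ≤ (h x * (μ sx).toReal) * (μ (sy \ sx)).toReal := by
            apply mul_le_mul_of_nonneg_right _ hD0
            rw [key x]; exact hbound1
        _ = (h x * (μ (sy \ sx)).toReal) * (μ sx).toReal := by ring
        _ ≤ (∫ ω in sy \ sx, h (W ω) ∂μ) * (μ sx).toReal :=
            mul_le_mul_of_nonneg_right hbound2 hFx.le
    have := hcross
    nlinarith [key x, key y, hFadd, hGadd, hGx0, hFx, hFy]
  -- transfer back to ENNReal
  have hx_ne : μ (X ⁻¹' A ∩ sx) / μ sx ≠ ⊤ :=
    (ENNReal.div_lt_top hGfinx hpos.ne').ne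
  have hy_ne : μ (X ⁻¹' A ∩ sy) / μ sy ≠ ⊤ :=
    (ENNReal.div_lt_top hGfiny (lt_of_lt_of_le hpos (measure_mono hss)).ne').ne
  show μ (X ⁻¹' A ∩ sx) / μ sx ≤ μ (X ⁻¹' A ∩ sy) / μ sy
  rw [← ENNReal.toReal_le_toReal hx_ne hy_ne, ENNReal.toReal_div, ENNReal.toReal_div]
  exact hreal
end

section
/- Let X_1,…,X_n be i.i.d. from a distribution P_X, let the test points X_{n+1},…,X_{n+m} be mutually independent and independent of (X_1,…,X_n), and let the synthetic data X̃_1,…,X̃_N be independent of (X_1,…,X_{n+m}). Let s be a fixed score function and assume the scores (s(X_i))_{i∈[n+m]} and (s(X̃_i))_{i∈[N]} are almost surely all distinct. For each j ∈ [m] define the conformal p-value p_j = (Σ_{i=1}^n 1{s(X_i) ≥ s(X_{n+j})} + 1)/(n+1) and the merged conformal p-value p̃_j = (Σ_{i=1}^n 1{s(X_i) ≥ s(X_{n+j})} + Σ_{i=1}^N 1{s(X̃_i) ≥ s(X_{n+j})} + 1)/(n+N+1). Then the random vector (p_1,…,p_m,p̃_1,…,p̃_m) ∈ ℝ^{2m}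 is positively regression dependent on the set of true nulls I_0 = {j ∈ [m] : X_{n+j} ∼ P_X} with respect to (p_1,…,p_m). -/
open MeasureTheory ProbabilityTheory

noncomputable section

set_option linter.unusedSectionVars false
set_option maxHeartbeats 1000000

namespace ConformalPRDS
open scoped ENNReal


lemma eq_range_card_of_dc (S : Finset ℕ) (h : ∀ r ∈ S, ∀ q ≤ r, q ∈ S) :
    S = Finset.range S.card := by
  ext q
  simp only [Finset.mem_range]
  constructor
  · intro hq
    have hsub : Finset.range (q + 1) ⊆ S := by
      intro a ha
      exact h q hq a (Nat.lt_succ_iff.mp (Finset.mem_range.mp ha))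
    have := Finset.card_le_card hsub
    simpa [Nat.succ_le_iff] using this
  · intro hq
    by_contra hqS
    have hsub : S ⊆ Finset.range q := by
      intro r hr
      by_contra hrq
      exact hqS (h r hr q (Nat.le_of_not_lt (by simpa [Finset.mem_range] using hrq)))
    have := Finset.card_le_card hsub
    simp only [Finset.card_range] at this
    omega

lemma key_ineq (a : ℕ → ℝ≥0∞) (u : ℝ≥0∞) (hu : u ≠ ⊤) (kx ky : ℕ)
    (hkx : 0 < kx) (hxy : kx ≤ ky)
    (ha : ∀ r, r + 1 < ky → a r ≤ a (r + 1)) (hau : ∀ r, a r ≤ u) :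
    (∑ r ∈ Finset.range kx, a r) / ((kx : ℝ≥0∞) * u) ≤
      (∑ r ∈ Finset.range ky, a r) / ((ky : ℝ≥0∞) * u) := by
  have hmono : ∀ r q, r ≤ q → q < ky → a r ≤ a q := by
    intro r q hrq hq
    induction q with
    | zero => simp [Nat.le_zero.mp hrq]
    | succ q ih =>
      rcases Nat.lt_or_ge r (q + 1) with h | h
      · exact le_trans (ih (Nat.lt_succ_iff.mp h) (by omega)) (ha q hq)
      · have : r = q + 1 := by omega
        simp [this]
  rcases eq_or_ne u 0 with hu0 | hu0
  · have hz : ∀ r, a r = 0 := fun r => le_antisymm (hu0 ▸ hau r) zero_le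
    simp [hz]
  · have hky : 0 < ky := lt_of_lt_of_le hkx hxy
    have hden : (kx : ℝ≥0∞) * u ≠ 0 := by
      simp only [ne_eq, mul_eq_zero, not_or, Nat.cast_eq_zero]
      exact ⟨by omega, hu0⟩
    have hden' : (kx : ℝ≥0∞) * u ≠ ⊤ := ENNReal.mul_ne_top (ENNReal.natCast_ne_top _) hu
    have hdeny : (ky : ℝ≥0∞) * u ≠ 0 := by
      simp only [ne_eq, mul_eq_zero, not_or, Nat.cast_eq_zero]
      exact ⟨by omega, hu0⟩
    have hdeny' : (ky : ℝ≥0∞) * u ≠ ⊤ := ENNReal.mul_ne_top (ENNReal.natCast_ne_top _) hu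
    set X := ∑ r ∈ Finset.range kx, a r with hX
    set Y := ∑ r ∈ Finset.range ky, a r with hY
    have hcore : X * (ky : ℝ≥0∞) ≤ Y * (kx : ℝ≥0∞) := by
      set d := ky - kx with hd
      have hky' : ky = kx + d := by omega
      have hsplit : Y = X + ∑ r ∈ Finset.Ico kx ky, a r := by
        rw [hY, hX, Finset.range_eq_Ico, Finset.range_eq_Ico]
        exact (Finset.sum_Ico_consecutive _ (Nat.zero_le kx) hxy).symm
      set M := ∑ r ∈ Finset.Ico kx ky, a r with hM
      set b := a (kx - 1) with hb
      have hXb : X ≤ (kx : ℝ≥0∞) * b := by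
        calc X ≤ (Finset.range kx).card • b := by
              refine Finset.sum_le_card_nsmul _ _ _ ?_
              intro r hr
              exact hmono r (kx - 1) (by simp at hr; omega) (by omega)
          _ = (kx : ℝ≥0∞) * b := by simp [nsmul_eq_mul]
      have hMb : (d : ℝ≥0∞) * b ≤ M := by
        calc (d : ℝ≥0∞) * b = (Finset.Ico kx ky).card • b := by
              simp [nsmul_eq_mul, Nat.card_Ico, hd]
          _ ≤ M := by
              refine Finset.card_nsmul_le_sum _ _ _ ?_
              intro r hr
              simp only [Finset.mem_Ico] at hr
              exact hmono (kx - 1) r (by omega) hr.2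
      calc X * (ky : ℝ≥0∞) = X * kx + X * d := by
            rw [hky']; push_cast; ring
        _ ≤ X * kx + ((kx : ℝ≥0∞) * b) * d := by gcongr
        _ = X * kx + ((d : ℝ≥0∞) * b) * kx := by ring
        _ ≤ X * kx + M * kx := by gcongr
        _ = Y * kx := by rw [hsplit]; ring
    calc X / ((kx : ℝ≥0∞) * u) = X * ((ky : ℝ≥0∞) * u) / (((kx : ℝ≥0∞) * u) * ((ky : ℝ≥0∞) * u)) := by
          rw [ENNReal.mul_div_mul_right _ _ hdeny hdeny']
      _ ≤ Y * ((kx : ℝ≥0∞) * u) / (((kx : ℝ≥0∞) * u) * ((ky : ℝ≥0∞) * u)) := by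
          refine ENNReal.div_le_div_right ?_ _
          calc X * ((ky : ℝ≥0∞) * u) = (X * ky) * u := by ring
            _ ≤ (Y * kx) * u := mul_le_mul_left hcore u
            _ = Y * ((kx : ℝ≥0∞) * u) := by ring
      _ = Y * ((kx : ℝ≥0∞) * u) / (((ky : ℝ≥0∞) * u) * ((kx : ℝ≥0∞) * u)) := by ring_nf
      _ = Y / ((ky : ℝ≥0∞) * u) := ENNReal.mul_div_mul_right _ _ hden hden'


noncomputable section
variable {𝓧 : Type*} [MeasurableSpace 𝓧]

def cnt (n m N : ℕ) (s : 𝓧 → ℝ) (j : Fin m) (θ : (Fin n ⊕ Fin m → 𝓧) × (Fin N → 𝓧)) : ℕ :=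
  (Finset.univ.filter (fun i : Fin n => s (θ.1 (Sum.inr j)) ≤ s (θ.1 (Sum.inl i)))).card

def cntS (n m N : ℕ) (s : 𝓧 → ℝ) (j : Fin m) (θ : (Fin n ⊕ Fin m → 𝓧) × (Fin N → 𝓧)) : ℕ :=
  (Finset.univ.filter (fun i : Fin N => s (θ.1 (Sum.inr j)) ≤ s (θ.2 i))).card

def Pv (n m N : ℕ) (s : 𝓧 → ℝ) (j : Fin m) (θ : (Fin n ⊕ Fin m → 𝓧) × (Fin N → 𝓧)) : ℝ :=
  ((cnt n m N s j θ : ℝ) + 1) / (n + 1)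

def Ptv (n m N : ℕ) (s : 𝓧 → ℝ) (j : Fin m) (θ : (Fin n ⊕ Fin m → 𝓧) × (Fin N → 𝓧)) : ℝ :=
  ((cnt n m N s j θ : ℝ) + (cntS n m N s j θ : ℝ) + 1) / (n + N + 1)

def Vec (n m N : ℕ) (s : 𝓧 → ℝ) (θ : (Fin n ⊕ Fin m → 𝓧) × (Fin N → 𝓧)) : Fin (m + m) → ℝ :=
  Fin.append (fun j => Pv n m N s j θ) (fun j => Ptv n m N s j θ)

def sw (n m N : ℕ) (i : Fin n) (k : Fin m) (θ : (Fin n ⊕ Fin m → 𝓧) × (Fin N → 𝓧)) :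
    (Fin n ⊕ Fin m → 𝓧) × (Fin N → 𝓧) :=
  (θ.1 ∘ Equiv.swap (Sum.inl i) (Sum.inr k), θ.2)

def Dinj (n m N : ℕ) (s : 𝓧 → ℝ) : Set ((Fin n ⊕ Fin m → 𝓧) × (Fin N → 𝓧)) :=
  {θ | Function.Injective (fun a : Fin n ⊕ Fin m => s (θ.1 a))}

def Elw (n m N : ℕ) (s : 𝓧 → ℝ) (k : Fin m) (r : ℕ) (i : Fin n) :
    Set ((Fin n ⊕ Fin m → 𝓧) × (Fin N → 𝓧)) :=
  {θ | cnt n m N s k θ = r ∧ s (θ.1 (Sum.inl i)) < s (θ.1 (Sum.inr k)) ∧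
    (∀ i', s (θ.1 (Sum.inl i')) < s (θ.1 (Sum.inr k)) →
      s (θ.1 (Sum.inl i')) ≤ s (θ.1 (Sum.inl i))) ∧ θ ∈ Dinj n m N s}

def Ehg (n m N : ℕ) (s : 𝓧 → ℝ) (k : Fin m) (r : ℕ) (i : Fin n) :
    Set ((Fin n ⊕ Fin m → 𝓧) × (Fin N → 𝓧)) :=
  {θ | cnt n m N s k θ = r + 1 ∧ s (θ.1 (Sum.inr k)) < s (θ.1 (Sum.inl i)) ∧
    (∀ i', s (θ.1 (Sum.inr k)) < s (θ.1 (Sum.inl i')) →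
      s (θ.1 (Sum.inl i)) ≤ s (θ.1 (Sum.inl i'))) ∧ θ ∈ Dinj n m N s}

variable {n m N : ℕ} {s : 𝓧 → ℝ} {k : Fin m} {i : Fin n}

lemma cnt_le (j : Fin m) (θ : (Fin n ⊕ Fin m → 𝓧) × (Fin N → 𝓧)) : cnt n m N s j θ ≤ n :=
  le_trans (Finset.card_filter_le _ _) (by simp)

-- evaluation lemmas for the swap map
lemma sw_inl_self (θ : (Fin n ⊕ Fin m → 𝓧) × (Fin N → 𝓧)) :
    (sw n m N i k θ).1 (Sum.inl i) = θ.1 (Sum.inr k) := by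
  simp [sw, Equiv.swap_apply_left]

lemma sw_inr_self (θ : (Fin n ⊕ Fin m → 𝓧) × (Fin N → 𝓧)) :
    (sw n m N i k θ).1 (Sum.inr k) = θ.1 (Sum.inl i) := by
  simp [sw, Equiv.swap_apply_right]

lemma sw_inl_ne (θ : (Fin n ⊕ Fin m → 𝓧) × (Fin N → 𝓧)) {i' : Fin n} (h : i' ≠ i) :
    (sw n m N i k θ).1 (Sum.inl i') = θ.1 (Sum.inl i') := by
  simp [sw]
  rw [Equiv.swap_apply_of_ne_of_ne (by simpa using h) (by simp)]

lemma sw_inr_ne (θ : (Fin n ⊕ Fin m → 𝓧) × (Fin N → 𝓧)) {j : Fin m} (h : j ≠ k) :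
    (sw n m N i k θ).1 (Sum.inr j) = θ.1 (Sum.inr j) := by
  simp [sw]
  rw [Equiv.swap_apply_of_ne_of_ne (by simp) (by simpa using h)]

lemma sw_sw (θ : (Fin n ⊕ Fin m → 𝓧) × (Fin N → 𝓧)) :
    sw n m N i k (sw n m N i k θ) = θ := by
  refine Prod.ext ?_ rfl
  funext a
  simp [sw]

lemma sw_inj (θ : (Fin n ⊕ Fin m → 𝓧) × (Fin N → 𝓧))
    (hD : Function.Injective (fun a : Fin n ⊕ Fin m => s (θ.1 a))) :
    Function.Injective (fun a : Fin n ⊕ Fin m => s ((sw n m N i k θ).1 a)) := by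
  have h : (fun a : Fin n ⊕ Fin m => s ((sw n m N i k θ).1 a)) =
      (fun a : Fin n ⊕ Fin m => s (θ.1 a)) ∘ (Equiv.swap (Sum.inl i) (Sum.inr k)) := rfl
  rw [h]
  exact hD.comp (Equiv.injective _)

section main
variable (θ : (Fin n ⊕ Fin m → 𝓧) × (Fin N → 𝓧))
  (hD : Function.Injective (fun a : Fin n ⊕ Fin m => s (θ.1 a)))
  (hlt : s (θ.1 (Sum.inl i)) < s (θ.1 (Sum.inr k)))
  (hmax : ∀ i', s (θ.1 (Sum.inl i')) < s (θ.1 (Sum.inr k)) →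
    s (θ.1 (Sum.inl i')) ≤ s (θ.1 (Sum.inl i)))

include hD hlt hmax in
lemma swap_cnt_k : cnt n m N s k (sw n m N i k θ) = cnt n m N s k θ + 1 := by
  classical
  unfold cnt
  have hset : (Finset.univ.filter (fun i' : Fin n =>
      s ((sw n m N i k θ).1 (Sum.inr k)) ≤ s ((sw n m N i k θ).1 (Sum.inl i')))) =
      insert i (Finset.univ.filter (fun i' : Fin n =>
        s (θ.1 (Sum.inr k)) ≤ s (θ.1 (Sum.inl i')))) := by
    ext i'
    simp only [Finset.mem_filter, Finset.mem_insert, Finset.mem_univ, true_and]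
    by_cases hii : i' = i
    · subst hii
      rw [sw_inl_self, sw_inr_self]
      simp [hlt.le]
    · rw [sw_inl_ne θ hii, sw_inr_self]
      constructor
      · intro h
        right
        by_contra hc
        have h1 : s (θ.1 (Sum.inl i')) < s (θ.1 (Sum.inr k)) := lt_of_not_ge hc
        have h2 : s (θ.1 (Sum.inl i')) ≤ s (θ.1 (Sum.inl i)) := hmax i' h1
        have h3 : s (θ.1 (Sum.inl i')) = s (θ.1 (Sum.inl i)) := le_antisymm h2 h
        exact hii (Sum.inl.inj (hD h3))
      · rintro (h | h)
        · exact absurd h hii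
        · exact le_trans hlt.le h
  rw [hset, Finset.card_insert_of_notMem (by simp [not_le.mpr hlt])]

include hlt in
lemma swap_cnt_mono (hDk : cnt n m N s k (sw n m N i k θ) = cnt n m N s k θ + 1) :
    ∀ j, cnt n m N s j θ ≤ cnt n m N s j (sw n m N i k θ) := by
  classical
  intro j
  by_cases hjk : j = k
  · subst hjk
    omega
  · unfold cnt
    refine Finset.card_le_card ?_
    intro i' hi'
    simp only [Finset.mem_filter, Finset.mem_univ, true_and] at hi' ⊢
    rw [sw_inr_ne θ hjk]
    by_cases hii : i' = i
    · subst hii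
      rw [sw_inl_self]
      exact le_trans hi' hlt.le
    · rw [sw_inl_ne θ hii]
      exact hi'

include hlt in
lemma swap_cntS_mono : ∀ j, cntS n m N s j θ ≤ cntS n m N s j (sw n m N i k θ) := by
  classical
  intro j
  by_cases hjk : j = k
  · subst hjk
    unfold cntS
    refine Finset.card_le_card ?_
    intro b hb
    simp only [Finset.mem_filter, Finset.mem_univ, true_and] at hb ⊢
    rw [sw_inr_self]
    show s (θ.1 (Sum.inl i)) ≤ s ((θ.2) b)
    exact le_trans hlt.le hb
  · unfold cntS
    rw [sw_inr_ne θ hjk]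
    exact le_rfl

include hD hlt hmax in
lemma mem_sw_Ehg {r : ℕ} (hr : cnt n m N s k θ = r) : sw n m N i k θ ∈ Ehg n m N s k r i := by
  refine ⟨by rw [swap_cnt_k θ hD hlt hmax, hr], ?_, ?_, sw_inj θ hD⟩
  · rw [sw_inl_self, sw_inr_self]
    exact hlt
  · intro i' h
    by_cases hii : i' = i
    · subst hii
      exact le_refl _
    · rw [sw_inl_ne θ hii] at h ⊢
      rw [sw_inr_self] at h
      rw [sw_inl_self]
      by_contra hc
      exact absurd h (not_lt.mpr (hmax i' (lt_of_not_ge hc)))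

end main

lemma mem_sw_Elw (θ : (Fin n ⊕ Fin m → 𝓧) × (Fin N → 𝓧)) {r : ℕ}
    (hθ : θ ∈ Ehg n m N s k r i) : sw n m N i k θ ∈ Elw n m N s k r i := by
  obtain ⟨hcnt, hgt, hmin, hD⟩ := hθ
  have hD' := sw_inj (i := i) (k := k) θ hD
  have hlt' : s ((sw n m N i k θ).1 (Sum.inl i)) < s ((sw n m N i k θ).1 (Sum.inr k)) := by
    rw [sw_inl_self, sw_inr_self]
    exact hgt
  have hmax' : ∀ i', s ((sw n m N i k θ).1 (Sum.inl i')) < s ((sw n m N i k θ).1 (Sum.inr k)) →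
      s ((sw n m N i k θ).1 (Sum.inl i')) ≤ s ((sw n m N i k θ).1 (Sum.inl i)) := by
    intro i' h
    by_cases hii : i' = i
    · subst hii
      exact le_refl _
    · rw [sw_inl_ne θ hii] at h ⊢
      rw [sw_inr_self] at h
      rw [sw_inl_self]
      by_contra hc
      exact absurd h (not_lt.mpr (hmin i' (lt_of_not_ge hc)))
  have hstep := swap_cnt_k (sw n m N i k θ) hD' hlt' hmax'
  rw [sw_sw] at hstep
  have hcnt' : cnt n m N s k (sw n m N i k θ) = r := by omega
  exact ⟨hcnt', hlt', hmax', hD'⟩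

lemma vec_mono_of_Elw (θ : (Fin n ⊕ Fin m → 𝓧) × (Fin N → 𝓧)) {r : ℕ}
    (hθ : θ ∈ Elw n m N s k r i) :
    ∀ l, Vec n m N s θ l ≤ Vec n m N s (sw n m N i k θ) l := by
  obtain ⟨hcnt, hlt, hmax, hD⟩ := hθ
  have hck := swap_cnt_k θ hD hlt hmax
  have hc := swap_cnt_mono θ hlt hck
  have hcS := swap_cntS_mono (i := i) θ hlt
  intro l
  refine Fin.addCases (fun j => ?_) (fun j => ?_) l
  · simp only [Vec, Fin.append_left]
    unfold Pv
    rw [div_le_div_iff_of_pos_right (by positivity)]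
    have h1' : (cnt n m N s j θ : ℝ) ≤ cnt n m N s j (sw n m N i k θ) := by
      exact_mod_cast hc j
    linarith
  · simp only [Vec, Fin.append_right]
    unfold Ptv
    rw [div_le_div_iff_of_pos_right (by positivity)]
    have h1 := hc j
    have h2 := hcS j
    have h1' : (cnt n m N s j θ : ℝ) ≤ cnt n m N s j (sw n m N i k θ) := by exact_mod_cast h1
    have h2' : (cntS n m N s j θ : ℝ) ≤ cntS n m N s j (sw n m N i k θ) := by exact_mod_cast h2
    linarith

lemma cover_Elw (r : ℕ) (hr : r < n) :
    {θ : (Fin n ⊕ Fin m → 𝓧) × (Fin N → 𝓧) | cnt n m N s k θ = r} ∩ Dinj n m N s =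
      ⋃ i : Fin n, Elw n m N s k r i := by
  classical
  ext θ
  constructor
  · rintro ⟨hcnt, hD⟩
    have hcard : (Finset.univ.filter (fun i' : Fin n =>
        ¬ (s (θ.1 (Sum.inr k)) ≤ s (θ.1 (Sum.inl i'))))).card = n - r := by
      have := Finset.card_filter_add_card_filter_not
        (s := (Finset.univ : Finset (Fin n)))
        (fun i' : Fin n => s (θ.1 (Sum.inr k)) ≤ s (θ.1 (Sum.inl i')))
      simp only [Finset.card_univ, Fintype.card_fin] at this
      have hc : (Finset.univ.filter (fun i' : Fin n =>
          s (θ.1 (Sum.inr k)) ≤ s (θ.1 (Sum.inl i')))).card = r := hcnt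
      omega
    have hne : (Finset.univ.filter (fun i' : Fin n =>
        ¬ (s (θ.1 (Sum.inr k)) ≤ s (θ.1 (Sum.inl i'))))).Nonempty := by
      rw [← Finset.card_pos, hcard]
      omega
    obtain ⟨i, hi, hmax⟩ := Finset.exists_max_image _ (fun i' => s (θ.1 (Sum.inl i'))) hne
    simp only [Finset.mem_filter, Finset.mem_univ, true_and, not_le] at hi hmax
    refine Set.mem_iUnion.mpr ⟨i, hcnt, hi, ?_, hD⟩
    intro i' h
    exact hmax i' h
  · intro hθ
    obtain ⟨i, hcnt, _, _, hD⟩ := Set.mem_iUnion.mp hθ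
    exact ⟨hcnt, hD⟩

lemma cover_Ehg (r : ℕ) :
    {θ : (Fin n ⊕ Fin m → 𝓧) × (Fin N → 𝓧) | cnt n m N s k θ = r + 1} ∩ Dinj n m N s =
      ⋃ i : Fin n, Ehg n m N s k r i := by
  classical
  ext θ
  constructor
  · rintro ⟨hcnt, hD⟩
    have hne : (Finset.univ.filter (fun i' : Fin n =>
        s (θ.1 (Sum.inr k)) ≤ s (θ.1 (Sum.inl i')))).Nonempty := by
      rw [← Finset.card_pos]
      have hc : (Finset.univ.filter (fun i' : Fin n =>
          s (θ.1 (Sum.inr k)) ≤ s (θ.1 (Sum.inl i')))).card = r + 1 := hcnt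
      omega
    obtain ⟨i, hi, hmin⟩ := Finset.exists_min_image _ (fun i' => s (θ.1 (Sum.inl i'))) hne
    simp only [Finset.mem_filter, Finset.mem_univ, true_and] at hi hmin
    have hstrict : ∀ i' : Fin n, s (θ.1 (Sum.inr k)) ≤ s (θ.1 (Sum.inl i')) →
        s (θ.1 (Sum.inr k)) < s (θ.1 (Sum.inl i')) := by
      intro i' h
      rcases lt_or_eq_of_le h with h' | h'
      · exact h'
      · exact absurd (hD h'.symm ▸ rfl : (Sum.inl i' : Fin n ⊕ Fin m) = Sum.inl i') (by
          have := hD (a₁ := Sum.inr k) (a₂ := Sum.inl i') h'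
          exact absurd this (by simp))
    refine Set.mem_iUnion.mpr ⟨i, hcnt, hstrict i hi, ?_, hD⟩
    intro i' h
    exact hmin i' h.le
  · intro hθ
    obtain ⟨i, hcnt, _, _, hD⟩ := Set.mem_iUnion.mp hθ
    exact ⟨hcnt, hD⟩

lemma disj_Elw (r : ℕ) :
    Pairwise (Function.onFun Disjoint fun i : Fin n => Elw n m N s k r i) := by
  intro i1 i2 h12
  rw [Function.onFun, Set.disjoint_left]
  rintro θ ⟨_, hlt1, hmax1, hD⟩ ⟨_, hlt2, hmax2, _⟩
  have h1 : s (θ.1 (Sum.inl i1)) ≤ s (θ.1 (Sum.inl i2)) := hmax2 i1 hlt1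
  have h2 : s (θ.1 (Sum.inl i2)) ≤ s (θ.1 (Sum.inl i1)) := hmax1 i2 hlt2
  exact h12 (Sum.inl.inj (hD (le_antisymm h1 h2)).symm).symm

lemma disj_Ehg (r : ℕ) :
    Pairwise (Function.onFun Disjoint fun i : Fin n => Ehg n m N s k r i) := by
  intro i1 i2 h12
  rw [Function.onFun, Set.disjoint_left]
  rintro θ ⟨_, hgt1, hmin1, hD⟩ ⟨_, hgt2, hmin2, _⟩
  have h1 : s (θ.1 (Sum.inl i1)) ≤ s (θ.1 (Sum.inl i2)) := hmin1 i2 hgt2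
  have h2 : s (θ.1 (Sum.inl i2)) ≤ s (θ.1 (Sum.inl i1)) := hmin2 i1 hgt1
  exact h12 (Sum.inl.inj (hD (le_antisymm h1 h2)).symm).symm

-- measurability lemmas
lemma measurable_score1 (a : Fin n ⊕ Fin m) (hs : Measurable s) :
    Measurable (fun θ : (Fin n ⊕ Fin m → 𝓧) × (Fin N → 𝓧) => s (θ.1 a)) :=
  hs.comp ((measurable_pi_apply a).comp measurable_fst)

lemma measurable_score2 (b : Fin N) (hs : Measurable s) :
    Measurable (fun θ : (Fin n ⊕ Fin m → 𝓧) × (Fin N → 𝓧) => s (θ.2 b)) :=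
  hs.comp ((measurable_pi_apply b).comp measurable_snd)

lemma measurable_cnt (hs : Measurable s) (j : Fin m) : Measurable (cnt n m N s j) := by
  have h : cnt n m N s j = fun θ =>
      ∑ i : Fin n, if s (θ.1 (Sum.inr j)) ≤ s (θ.1 (Sum.inl i)) then 1 else 0 := by
    funext θ
    simp only [cnt, Finset.card_filter]
  rw [h]
  exact Finset.measurable_sum _ fun i _ =>
    Measurable.ite (measurableSet_le (measurable_score1 _ hs)
      (measurable_score1 _ hs)) measurable_const measurable_const

lemma measurable_cntS (hs : Measurable s) (j : Fin m) : Measurable (cntS n m N s j) := by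
  have h : cntS n m N s j = fun θ =>
      ∑ i : Fin N, if s (θ.1 (Sum.inr j)) ≤ s (θ.2 i) then 1 else 0 := by
    funext θ
    simp only [cntS, Finset.card_filter]
  rw [h]
  exact Finset.measurable_sum _ fun i _ =>
    Measurable.ite (measurableSet_le (measurable_score1 _ hs)
      (measurable_score2 _ hs)) measurable_const measurable_const

lemma measurableSet_vec_mem (hs : Measurable s) (A : Set (Fin (m + m) → ℝ)) :
    MeasurableSet {θ : (Fin n ⊕ Fin m → 𝓧) × (Fin N → 𝓧) | Vec n m N s θ ∈ A} := by
  classical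
  let K : (Fin m → ℕ) × (Fin m → ℕ) → (Fin (m + m) → ℝ) := fun q =>
    Fin.append (fun j => ((q.1 j : ℝ) + 1) / (n + 1))
      (fun j => ((q.1 j : ℝ) + (q.2 j : ℝ) + 1) / (n + N + 1))
  let G : (Fin n ⊕ Fin m → 𝓧) × (Fin N → 𝓧) → (Fin m → ℕ) × (Fin m → ℕ) := fun θ =>
    (fun j => cnt n m N s j θ, fun j => cntS n m N s j θ)
  have hG : Measurable G :=
    Measurable.prodMk (measurable_pi_lambda _ fun j => measurable_cnt hs j)
      (measurable_pi_lambda _ fun j => measurable_cntS hs j)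
  have hKG : {θ : (Fin n ⊕ Fin m → 𝓧) × (Fin N → 𝓧) | Vec n m N s θ ∈ A} =
      G ⁻¹' {q | K q ∈ A} := rfl
  rw [hKG]
  exact hG ((Set.to_countable _).measurableSet)

lemma measurableSet_inj (hs : Measurable s) :
    MeasurableSet (Dinj n m N s (𝓧 := 𝓧)) := by
  have h : Dinj n m N s (𝓧 := 𝓧) =
      ⋂ (a : Fin n ⊕ Fin m) (b : Fin n ⊕ Fin m),
        {θ : (Fin n ⊕ Fin m → 𝓧) × (Fin N → 𝓧) | s (θ.1 a) = s (θ.1 b) → a = b} := by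
    ext θ
    simp [Dinj, Function.Injective]
  rw [h]
  refine MeasurableSet.iInter fun a => MeasurableSet.iInter fun b => ?_
  by_cases hab : a = b
  · subst hab
    simp
  · have h2 : {θ : (Fin n ⊕ Fin m → 𝓧) × (Fin N → 𝓧) | s (θ.1 a) = s (θ.1 b) → a = b} =
        {θ : (Fin n ⊕ Fin m → 𝓧) × (Fin N → 𝓧) | s (θ.1 a) = s (θ.1 b)}ᶜ := by
      ext θ
      simp [hab]
    rw [h2]
    exact (measurableSet_eq_fun (measurable_score1 a hs) (measurable_score1 b hs)).compl

lemma measurableSet_Elw (hs : Measurable s) (r : ℕ) (i : Fin n) :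
    MeasurableSet (Elw n m N s k r i) := by
  have h : Elw n m N s k r i = (cnt n m N s k) ⁻¹' {r} ∩
      ({θ : (Fin n ⊕ Fin m → 𝓧) × (Fin N → 𝓧) | s (θ.1 (Sum.inl i)) < s (θ.1 (Sum.inr k))} ∩
      ((⋂ i' : Fin n, ({θ | s (θ.1 (Sum.inl i')) < s (θ.1 (Sum.inr k))}ᶜ ∪
        {θ | s (θ.1 (Sum.inl i')) ≤ s (θ.1 (Sum.inl i))})) ∩ Dinj n m N s)) := by
    ext θ
    simp only [Elw, Set.mem_setOf_eq, Set.mem_inter_iff, Set.mem_preimage,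
      Set.mem_singleton_iff, Set.mem_iInter, Set.mem_union, Set.mem_compl_iff]
    constructor
    · rintro ⟨h1, h2, h3, h4⟩
      exact ⟨h1, h2, fun i' => by by_cases hc : s (θ.1 (Sum.inl i')) < s (θ.1 (Sum.inr k))
                                  · exact Or.inr (h3 i' hc)
                                  · exact Or.inl hc, h4⟩
    · rintro ⟨h1, h2, h3, h4⟩
      refine ⟨h1, h2, fun i' hc => ?_, h4⟩
      rcases h3 i' with h | h
      · exact absurd hc h
      · exact h
  rw [h]
  refine ((measurable_cnt hs k) (measurableSet_singleton r)).inter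
    ((measurableSet_lt (measurable_score1 _ hs) (measurable_score1 _ hs)).inter
      ((MeasurableSet.iInter fun i' =>
        ((measurableSet_lt (measurable_score1 _ hs) (measurable_score1 _ hs)).compl.union
          (measurableSet_le (measurable_score1 _ hs) (measurable_score1 _ hs)))).inter
        (measurableSet_inj hs)))

lemma measurableSet_Ehg (hs : Measurable s) (r : ℕ) (i : Fin n) :
    MeasurableSet (Ehg n m N s k r i) := by
  have h : Ehg n m N s k r i = (cnt n m N s k) ⁻¹' {r + 1} ∩
      ({θ : (Fin n ⊕ Fin m → 𝓧) × (Fin N → 𝓧) | s (θ.1 (Sum.inr k)) < s (θ.1 (Sum.inl i))} ∩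
      ((⋂ i' : Fin n, ({θ | s (θ.1 (Sum.inr k)) < s (θ.1 (Sum.inl i'))}ᶜ ∪
        {θ | s (θ.1 (Sum.inl i)) ≤ s (θ.1 (Sum.inl i'))})) ∩ Dinj n m N s)) := by
    ext θ
    simp only [Ehg, Set.mem_setOf_eq, Set.mem_inter_iff, Set.mem_preimage,
      Set.mem_singleton_iff, Set.mem_iInter, Set.mem_union, Set.mem_compl_iff]
    constructor
    · rintro ⟨h1, h2, h3, h4⟩
      exact ⟨h1, h2, fun i' => by by_cases hc : s (θ.1 (Sum.inr k)) < s (θ.1 (Sum.inl i'))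
                                  · exact Or.inr (h3 i' hc)
                                  · exact Or.inl hc, h4⟩
    · rintro ⟨h1, h2, h3, h4⟩
      refine ⟨h1, h2, fun i' hc => ?_, h4⟩
      rcases h3 i' with h | h
      · exact absurd hc h
      · exact h
  rw [h]
  refine ((measurable_cnt hs k) (measurableSet_singleton (r + 1))).inter
    ((measurableSet_lt (measurable_score1 _ hs) (measurable_score1 _ hs)).inter
      ((MeasurableSet.iInter fun i' =>
        ((measurableSet_lt (measurable_score1 _ hs) (measurable_score1 _ hs)).compl.union
          (measurableSet_le (measurable_score1 _ hs) (measurable_score1 _ hs)))).inter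
        (measurableSet_inj hs)))

lemma step_main (hs : Measurable s) (ν : Measure ((Fin n ⊕ Fin m → 𝓧) × (Fin N → 𝓧)))
    (hswap : ∀ i : Fin n, MeasurePreserving (sw n m N i k) ν ν)
    (hD0 : ν (Dinj n m N s)ᶜ = 0)
    (SA : Set ((Fin n ⊕ Fin m → 𝓧) × (Fin N → 𝓧))) (hSA : MeasurableSet SA)
    (hSAcl : ∀ (i : Fin n) (θ) (r : ℕ), θ ∈ Elw n m N s k r i → θ ∈ SA →
      sw n m N i k θ ∈ SA)
    (r : ℕ) (hr : r < n) :
    ν (SA ∩ {θ | cnt n m N s k θ = r}) ≤ ν (SA ∩ {θ | cnt n m N s k θ = r + 1}) ∧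
      ν {θ | cnt n m N s k θ = r} = ν {θ | cnt n m N s k θ = r + 1} := by
  classical
  have hErm : ∀ q : ℕ, MeasurableSet {θ : (Fin n ⊕ Fin m → 𝓧) × (Fin N → 𝓧) |
      cnt n m N s k θ = q} := fun q => (measurable_cnt hs k) (measurableSet_singleton q)
  have decomp : ∀ (S : Set ((Fin n ⊕ Fin m → 𝓧) × (Fin N → 𝓧))), MeasurableSet S →
      ν (S ∩ {θ | cnt n m N s k θ = r}) = ∑ i : Fin n, ν (S ∩ Elw n m N s k r i) ∧
      ν (S ∩ {θ | cnt n m N s k θ = r + 1}) = ∑ i : Fin n, ν (S ∩ Ehg n m N s k r i) := by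
    intro S hS
    constructor
    · calc ν (S ∩ {θ | cnt n m N s k θ = r})
          = ν ((S ∩ {θ | cnt n m N s k θ = r}) ∩ Dinj n m N s) :=
            (measure_inter_conull hD0).symm
        _ = ν (⋃ i : Fin n, S ∩ Elw n m N s k r i) := by
            rw [Set.inter_assoc, cover_Elw r hr, Set.inter_iUnion]
        _ = ∑' i : Fin n, ν (S ∩ Elw n m N s k r i) :=
            measure_iUnion
              (fun i1 i2 h12 => ((disj_Elw r h12).mono Set.inter_subset_right
                Set.inter_subset_right))
              (fun i => hS.inter (measurableSet_Elw hs r i))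
        _ = ∑ i : Fin n, ν (S ∩ Elw n m N s k r i) := tsum_fintype _
    · calc ν (S ∩ {θ | cnt n m N s k θ = r + 1})
          = ν ((S ∩ {θ | cnt n m N s k θ = r + 1}) ∩ Dinj n m N s) :=
            (measure_inter_conull hD0).symm
        _ = ν (⋃ i : Fin n, S ∩ Ehg n m N s k r i) := by
            rw [Set.inter_assoc, cover_Ehg r, Set.inter_iUnion]
        _ = ∑' i : Fin n, ν (S ∩ Ehg n m N s k r i) :=
            measure_iUnion
              (fun i1 i2 h12 => ((disj_Ehg r h12).mono Set.inter_subset_right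
                Set.inter_subset_right))
              (fun i => hS.inter (measurableSet_Ehg hs r i))
        _ = ∑ i : Fin n, ν (S ∩ Ehg n m N s k r i) := tsum_fintype _
  have per_le : ∀ i : Fin n, ν (SA ∩ Elw n m N s k r i) ≤ ν (SA ∩ Ehg n m N s k r i) := by
    intro i
    have hsub : SA ∩ Elw n m N s k r i ⊆ sw n m N i k ⁻¹' (SA ∩ Ehg n m N s k r i) := by
      rintro θ ⟨hθS, hθE⟩
      refine ⟨hSAcl i θ r hθE hθS, ?_⟩
      obtain ⟨h1, h2, h3, h4⟩ := hθE
      exact mem_sw_Ehg θ h4 h2 h3 h1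
    calc ν (SA ∩ Elw n m N s k r i) ≤ ν (sw n m N i k ⁻¹' (SA ∩ Ehg n m N s k r i)) :=
          measure_mono hsub
      _ = ν (SA ∩ Ehg n m N s k r i) :=
          (hswap i).measure_preimage (hSA.inter (measurableSet_Ehg hs r i)).nullMeasurableSet
  have per_eq : ∀ i : Fin n, ν (Elw n m N s k r i) = ν (Ehg n m N s k r i) := by
    intro i
    have h1 : Elw n m N s k r i ⊆ sw n m N i k ⁻¹' (Ehg n m N s k r i) := by
      rintro θ ⟨h1, h2, h3, h4⟩
      exact mem_sw_Ehg θ h4 h2 h3 h1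
    have h2 : Ehg n m N s k r i ⊆ sw n m N i k ⁻¹' (Elw n m N s k r i) := fun θ hθ =>
      mem_sw_Elw θ hθ
    refine le_antisymm ?_ ?_
    · calc ν (Elw n m N s k r i) ≤ ν (sw n m N i k ⁻¹' (Ehg n m N s k r i)) := measure_mono h1
        _ = ν (Ehg n m N s k r i) :=
          (hswap i).measure_preimage (measurableSet_Ehg hs r i).nullMeasurableSet
    · calc ν (Ehg n m N s k r i) ≤ ν (sw n m N i k ⁻¹' (Elw n m N s k r i)) := measure_mono h2
        _ = ν (Elw n m N s k r i) :=
          (hswap i).measure_preimage (measurableSet_Elw hs r i).nullMeasurableSet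
  constructor
  · rw [(decomp SA hSA).1, (decomp SA hSA).2]
    exact Finset.sum_le_sum fun i _ => per_le i
  · have d1 := (decomp Set.univ MeasurableSet.univ).1
    have d2 := (decomp Set.univ MeasurableSet.univ).2
    simp only [Set.univ_inter] at d1 d2
    rw [d1, d2]
    exact Finset.sum_congr rfl fun i _ => per_eq i

theorem aux_prds (hs : Measurable s) (ν : Measure ((Fin n ⊕ Fin m → 𝓧) × (Fin N → 𝓧)))
    [IsProbabilityMeasure ν]
    (hswap : ∀ i : Fin n, MeasurePreserving (sw n m N i k) ν ν)
    (hdist : ∀ᵐ θ ∂ν, θ ∈ Dinj n m N s)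
    (A : Set (Fin (m + m) → ℝ)) (hA : IncreasingSet A) {x y : ℝ} (hxy : x ≤ y)
    (hpos : 0 < ν {θ | Pv n m N s k θ ≤ x}) :
    ν ({θ | Vec n m N s θ ∈ A} ∩ {θ | Pv n m N s k θ ≤ x}) / ν {θ | Pv n m N s k θ ≤ x} ≤
      ν ({θ | Vec n m N s θ ∈ A} ∩ {θ | Pv n m N s k θ ≤ y}) / ν {θ | Pv n m N s k θ ≤ y} := by
  classical
  have hD0 : ν (Dinj n m N s)ᶜ = 0 := ae_iff.mp hdist
  set SA : Set ((Fin n ⊕ Fin m → 𝓧) × (Fin N → 𝓧)) := {θ | Vec n m N s θ ∈ A} with hSAdef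
  have hSA : MeasurableSet SA := measurableSet_vec_mem hs A
  have hSAcl : ∀ (i : Fin n) (θ) (r : ℕ), θ ∈ Elw n m N s k r i → θ ∈ SA →
      sw n m N i k θ ∈ SA := fun i θ r hE hS => hA hS (vec_mono_of_Elw θ hE)
  have step := fun (r : ℕ) (hr : r < n) =>
    step_main hs ν hswap hD0 SA hSA hSAcl r hr
  have hErm : ∀ q : ℕ, MeasurableSet {θ : (Fin n ⊕ Fin m → 𝓧) × (Fin N → 𝓧) |
      cnt n m N s k θ = q} := fun q => (measurable_cnt hs k) (measurableSet_singleton q)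
  set u : ℝ≥0∞ := ν {θ | cnt n m N s k θ = 0} with hu
  have hchain : ∀ r : ℕ, r ≤ n → ν {θ | cnt n m N s k θ = r} = u := by
    intro r
    induction r with
    | zero => intro _; rfl
    | succ r ih =>
      intro hrn
      rw [← (step r (by omega)).2]
      exact ih (by omega)
  set a : ℕ → ℝ≥0∞ := fun r => ν (SA ∩ {θ | cnt n m N s k θ = r}) with ha
  have hErDisj : ∀ (T : Finset ℕ), Set.PairwiseDisjoint (T : Set ℕ)
      (fun r => {θ : (Fin n ⊕ Fin m → 𝓧) × (Fin N → 𝓧) | cnt n m N s k θ = r}) := by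
    intro T r _ q _ hrq
    rw [Function.onFun, Set.disjoint_left]
    rintro θ h1 h2
    exact hrq ((h1 : cnt n m N s k θ = r).symm.trans h2)
  set Sz : ℝ → Finset ℕ := fun z =>
    (Finset.range (n + 1)).filter (fun r => ((r : ℝ) + 1) / ((n : ℝ) + 1) ≤ z) with hSz
  have hev : ∀ z : ℝ, {θ : (Fin n ⊕ Fin m → 𝓧) × (Fin N → 𝓧) | Pv n m N s k θ ≤ z} =
      ⋃ r ∈ Sz z, {θ | cnt n m N s k θ = r} := by
    intro z
    ext θ
    simp only [Set.mem_setOf_eq, Set.mem_iUnion, exists_prop, hSz, Finset.mem_filter,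
      Finset.mem_range]
    constructor
    · intro h
      exact ⟨cnt n m N s k θ, ⟨Nat.lt_succ_of_le (cnt_le k θ), h⟩, rfl⟩
    · rintro ⟨r, ⟨_, hle⟩, hcnt⟩
      show ((cnt n m N s k θ : ℝ) + 1) / ((n : ℝ) + 1) ≤ z
      rw [hcnt]
      exact hle
  have hmeas : ∀ z : ℝ, ν {θ | Pv n m N s k θ ≤ z} =
      ∑ r ∈ Sz z, ν {θ | cnt n m N s k θ = r} := by
    intro z
    rw [hev z]
    exact measure_biUnion_finset (hErDisj (Sz z)) fun r _ => hErm r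
  have hnum : ∀ z : ℝ, ν (SA ∩ {θ | Pv n m N s k θ ≤ z}) = ∑ r ∈ Sz z, a r := by
    intro z
    rw [hev z, Set.inter_iUnion₂]
    exact measure_biUnion_finset
      (fun r hr q hq hrq => ((hErDisj (Sz z) hr hq hrq).mono Set.inter_subset_right
        Set.inter_subset_right))
      (fun r _ => hSA.inter (hErm r))
  have hdc : ∀ z : ℝ, ∀ r ∈ Sz z, ∀ q ≤ r, q ∈ Sz z := by
    intro z r hr q hq
    simp only [hSz, Finset.mem_filter, Finset.mem_range] at hr ⊢
    refine ⟨by omega, le_trans ?_ hr.2⟩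
    rw [div_le_div_iff_of_pos_right (by positivity)]
    have : (q : ℝ) ≤ r := by exact_mod_cast hq
    linarith
  have hcard : ∀ z : ℝ, (Sz z).card ≤ n + 1 := fun z =>
    le_trans (Finset.card_le_card (Finset.filter_subset _ _)) (by simp)
  set kx := (Sz x).card with hkx
  set ky := (Sz y).card with hky
  have hSx : Sz x = Finset.range kx := eq_range_card_of_dc _ (hdc x)
  have hSy : Sz y = Finset.range ky := eq_range_card_of_dc _ (hdc y)
  have hden : ∀ z : ℝ, (Sz z).card ≤ n + 1 → Sz z = Finset.range (Sz z).card →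
      ν {θ | Pv n m N s k θ ≤ z} = ((Sz z).card : ℝ≥0∞) * u := by
    intro z hc hrange
    rw [hmeas z, hrange]
    rw [Finset.sum_congr rfl fun r hr => hchain r (by
      simp only [Finset.mem_range] at hr
      omega)]
    simp [mul_comm]
  have hdenx := hden x (hcard x) hSx
  have hdeny := hden y (hcard y) hSy
  have hkxpos : 0 < kx := by
    by_contra hc
    have h0 : kx = 0 := by omega
    rw [hdenx, ← hkx, h0] at hpos
    simp at hpos
  have hkxy : kx ≤ ky := by
    refine Finset.card_le_card ?_
    intro r hr
    simp only [hSz, Finset.mem_filter, Finset.mem_range] at hr ⊢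
    exact ⟨hr.1, le_trans hr.2 hxy⟩
  have hau : ∀ r, a r ≤ u := by
    intro r
    rcases le_or_gt r n with h | h
    · exact le_trans (measure_mono Set.inter_subset_right) (le_of_eq (hchain r h))
    · have hempty : {θ : (Fin n ⊕ Fin m → 𝓧) × (Fin N → 𝓧) | cnt n m N s k θ = r} = ∅ := by
        ext θ
        simp only [Set.mem_setOf_eq, Set.mem_empty_iff_false, iff_false]
        intro hcnt
        have := cnt_le (s := s) (N := N) k θ
        omega
      calc a r ≤ ν {θ | cnt n m N s k θ = r} := measure_mono Set.inter_subset_right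
        _ = 0 := by rw [hempty]; simp
        _ ≤ u := zero_le
  have hstep : ∀ r, r + 1 < ky → a r ≤ a (r + 1) := by
    intro r hrky
    have hrn : r < n := by
      have := hcard y
      omega
    exact (step r hrn).1
  rw [hnum x, hnum y, hdenx, hdeny, hSx, hSy, Finset.card_range, Finset.card_range]
  exact key_ineq a u (measure_ne_top ν _) kx ky hkxpos hkxy hstep hau

lemma measurable_Pv (hs : Measurable s) (j : Fin m) : Measurable (Pv n m N s j) := by
  have h : Pv n m N s j = (fun c : ℕ => ((c : ℝ) + 1) / ((n : ℝ) + 1)) ∘ (cnt n m N s j) := rfl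
  rw [h]
  exact measurable_from_nat.comp (measurable_cnt hs j)

end
end ConformalPRDS

/-- **Conformal p-values are PRDS on the true nulls with respect to the real p-values.**
The reference data `Xr` are i.i.d. from `PX`, the test points `Xt` are mutually independent
and independent of the reference data (encoded jointly by `hindep`), and the synthetic data
`Xs` are independent of everything else.  The scores are a.s. all distinct.  Then the vector
`(p_1,…,p_m,p̃_1,…,p̃_m)` of conformal and merged conformal p-values is positively regression
dependent on the set of true nulls `I₀ = {j : X_{n+j} ∼ PX}` with respect to `(p_1,…,p_m)`. -/
theorem conformal_pvalues_PRDS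
    {Ω 𝓧 : Type*} [MeasurableSpace Ω] [MeasurableSpace 𝓧]
    (μ : Measure Ω) [IsProbabilityMeasure μ]
    (n m N : ℕ) (PX : Measure 𝓧)
    (Xr : Fin n → Ω → 𝓧) (Xt : Fin m → Ω → 𝓧) (Xs : Fin N → Ω → 𝓧)
    (hXr : ∀ i, Measurable (Xr i)) (hXt : ∀ j, Measurable (Xt j))
    (hXs : ∀ i, Measurable (Xs i))
    (hiid : ∀ i, Measure.map (Xr i) μ = PX)
    (hindep : iIndepFun
      (Sum.elim Xr Xt) μ)
    (hsyn : IndepFun (fun ω => fun i : Fin n ⊕ Fin m => Sum.elim Xr Xt i ω)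
      (fun ω => fun i : Fin N => Xs i ω) μ)
    (s : 𝓧 → ℝ) (hs : Measurable s)
    (hdistinct : ∀ᵐ ω ∂μ, Function.Injective (fun i : (Fin n ⊕ Fin m) ⊕ Fin N =>
      Sum.elim (fun a => s (Sum.elim Xr Xt a ω)) (fun b => s (Xs b ω)) i))
    (I0 : Finset (Fin m)) (hI0 : ∀ j, j ∈ I0 ↔ Measure.map (Xt j) μ = PX)
    (p pt : Fin m → Ω → ℝ)
    (hp : ∀ j ω, p j ω =
      (((Finset.univ.filter (fun i : Fin n => s (Xt j ω) ≤ s (Xr i ω))).card + 1 : ℝ)) / (n + 1))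
    (hpt : ∀ j ω, pt j ω =
      (((Finset.univ.filter (fun i : Fin n => s (Xt j ω) ≤ s (Xr i ω))).card
        + (Finset.univ.filter (fun i : Fin N => s (Xt j ω) ≤ s (Xs i ω))).card + 1 : ℝ))
        / (n + N + 1)) :
    PRDSOn μ (fun ω => Fin.append (fun j => p j ω) (fun j => pt j ω)) p I0 := by
  classical
  intro k hk A hA x y hxy hpos
  have hknull : Measure.map (Xt k) μ = PX := (hI0 k).mp hk
  -- the joint variable
  set Z : Ω → (Fin n ⊕ Fin m → 𝓧) × (Fin N → 𝓧) :=
    fun ω => (fun a => Sum.elim Xr Xt a ω, fun b => Xs b ω) with hZdef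
  have helim : ∀ a : Fin n ⊕ Fin m, Measurable (Sum.elim Xr Xt a) := by
    rintro (i | j)
    · exact hXr i
    · exact hXt j
  have hJ : Measurable (fun ω => fun a : Fin n ⊕ Fin m => Sum.elim Xr Xt a ω) :=
    measurable_pi_lambda _ helim
  have hW : Measurable (fun ω => fun b : Fin N => Xs b ω) := measurable_pi_lambda _ hXs
  have hZ : Measurable Z := hJ.prodMk hW
  set ν : Measure ((Fin n ⊕ Fin m → 𝓧) × (Fin N → 𝓧)) := μ.map Z with hνdef
  haveI : IsProbabilityMeasure ν := Measure.isProbabilityMeasure_map hZ.aemeasurable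
  -- marginals
  set marg : Fin n ⊕ Fin m → Measure 𝓧 := fun a => μ.map (Sum.elim Xr Xt a) with hmargdef
  haveI hmargprob : ∀ a, IsProbabilityMeasure (marg a) := fun a =>
    Measure.isProbabilityMeasure_map (helim a).aemeasurable
  have hmargl : ∀ i : Fin n, marg (Sum.inl i) = PX := fun i => hiid i
  have hmargr : marg (Sum.inr k) = PX := hknull
  -- product structure
  have hjoint : Measure.pi marg = μ.map (fun ω => fun a : Fin n ⊕ Fin m => Sum.elim Xr Xt a ω) := by
    refine Measure.pi_eq fun sets hsets => ?_
    rw [Measure.map_apply hJ (MeasurableSet.univ_pi hsets)]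
    have hpre : (fun ω => fun a : Fin n ⊕ Fin m => Sum.elim Xr Xt a ω) ⁻¹' (Set.univ.pi sets) =
        ⋂ a ∈ Finset.univ, (Sum.elim Xr Xt a) ⁻¹' (sets a) := by
      ext ω
      simp [Set.mem_pi]
    rw [hpre, hindep.measure_inter_preimage_eq_mul Finset.univ (fun a _ => hsets a)]
    exact Finset.prod_congr rfl fun a _ => (Measure.map_apply (helim a) (hsets a)).symm
  set Q : Measure (Fin N → 𝓧) := μ.map (fun ω => fun b : Fin N => Xs b ω) with hQdef
  haveI : IsProbabilityMeasure Q := Measure.isProbabilityMeasure_map hW.aemeasurable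
  have hν : ν = (Measure.pi marg).prod Q := by
    have hprod := (indepFun_iff_map_prod_eq_prod_map_map hJ.aemeasurable hW.aemeasurable).mp hsyn
    rw [hνdef, hjoint]
    exact hprod
  -- the swaps are measure preserving
  have hswap : ∀ i : Fin n, MeasurePreserving (ConformalPRDS.sw n m N i k) ν ν := by
    intro i
    have hmarg : ∀ a, marg (Equiv.swap (Sum.inl i : Fin n ⊕ Fin m) (Sum.inr k) a) = marg a := by
      intro a
      by_cases h1 : a = Sum.inl i
      · subst h1
        rw [Equiv.swap_apply_left]
        show marg (Sum.inr k) = marg (Sum.inl i)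
        rw [hmargr, hmargl i]
      · by_cases h2 : a = Sum.inr k
        · subst h2
          rw [Equiv.swap_apply_right]
          show marg (Sum.inl i) = marg (Sum.inr k)
          rw [hmargr, hmargl i]
        · rw [Equiv.swap_apply_of_ne_of_ne h1 h2]
    have hcoe : ⇑(MeasurableEquiv.piCongrLeft (fun _ : Fin n ⊕ Fin m => 𝓧)
        (Equiv.swap (Sum.inl i : Fin n ⊕ Fin m) (Sum.inr k))) =
        (fun h : Fin n ⊕ Fin m → 𝓧 =>
          h ∘ (Equiv.swap (Sum.inl i : Fin n ⊕ Fin m) (Sum.inr k))) := by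
      funext h a
      obtain ⟨b, rfl⟩ : ∃ b, (Equiv.swap (Sum.inl i : Fin n ⊕ Fin m) (Sum.inr k)) b = a :=
        ⟨_, Equiv.swap_apply_self _ _ a⟩
      rw [MeasurableEquiv.piCongrLeft_apply_apply]
      show h b = h ((Equiv.swap (Sum.inl i : Fin n ⊕ Fin m) (Sum.inr k))
        ((Equiv.swap (Sum.inl i : Fin n ⊕ Fin m) (Sum.inr k)) b))
      rw [Equiv.swap_apply_self]
    have hg : MeasurePreserving (fun h : Fin n ⊕ Fin m → 𝓧 =>
        h ∘ (Equiv.swap (Sum.inl i : Fin n ⊕ Fin m) (Sum.inr k)))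
        (Measure.pi marg) (Measure.pi marg) := by
      have hmp := measurePreserving_piCongrLeft marg
        (Equiv.swap (Sum.inl i : Fin n ⊕ Fin m) (Sum.inr k))
      rw [hcoe] at hmp
      rw [show (Measure.pi fun a => marg ((Equiv.swap (Sum.inl i : Fin n ⊕ Fin m) (Sum.inr k)) a))
          = Measure.pi marg from by rw [funext hmarg]] at hmp
      exact hmp
    have hid : MeasurePreserving (id : (Fin N → 𝓧) → (Fin N → 𝓧)) Q Q :=
      MeasurePreserving.id Q
    have hmp2 := hg.prod hid
    have hswfun : ConformalPRDS.sw n m N i k =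
        Prod.map (fun h : Fin n ⊕ Fin m → 𝓧 =>
          h ∘ (Equiv.swap (Sum.inl i : Fin n ⊕ Fin m) (Sum.inr k)))
          (id : (Fin N → 𝓧) → (Fin N → 𝓧)) := rfl
    rw [hν, hswfun]
    exact hmp2
  -- distinctness
  have hDm : MeasurableSet (ConformalPRDS.Dinj n m N s (𝓧 := 𝓧)) :=
    ConformalPRDS.measurableSet_inj hs
  have hdistν : ∀ᵐ θ ∂ν, θ ∈ ConformalPRDS.Dinj n m N s := by
    rw [ae_iff]
    have hμ0 : μ {ω | ¬ Function.Injective (fun i : (Fin n ⊕ Fin m) ⊕ Fin N =>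
        Sum.elim (fun a => s (Sum.elim Xr Xt a ω)) (fun b => s (Xs b ω)) i)} = 0 :=
      ae_iff.mp hdistinct
    have hsub : Z ⁻¹' {θ | ¬ θ ∈ ConformalPRDS.Dinj n m N s} ⊆
        {ω | ¬ Function.Injective (fun i : (Fin n ⊕ Fin m) ⊕ Fin N =>
          Sum.elim (fun a => s (Sum.elim Xr Xt a ω)) (fun b => s (Xs b ω)) i)} := by
      intro ω hω hInj
      refine hω ?_
      intro a a' haa
      have h2 := hInj (a₁ := Sum.inl a) (a₂ := Sum.inl a') haa
      exact Sum.inl.inj h2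
    refine le_antisymm ?_ zero_le
    calc ν {θ | ¬ θ ∈ ConformalPRDS.Dinj n m N s} =
        μ (Z ⁻¹' {θ | ¬ θ ∈ ConformalPRDS.Dinj n m N s}) :=
          Measure.map_apply hZ hDm.compl
      _ ≤ μ {ω | ¬ Function.Injective (fun i : (Fin n ⊕ Fin m) ⊕ Fin N =>
          Sum.elim (fun a => s (Sum.elim Xr Xt a ω)) (fun b => s (Xs b ω)) i)} :=
          measure_mono hsub
      _ = 0 := hμ0
      _ ≤ 0 := le_rfl
  -- translate the p-values
  have h_pj : ∀ (j : Fin m) (ω : Ω), p j ω = ConformalPRDS.Pv n m N s j (Z ω) := by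
    intro j ω
    rw [hp j ω]
    rfl
  have h_ptj : ∀ (j : Fin m) (ω : Ω), pt j ω = ConformalPRDS.Ptv n m N s j (Z ω) := by
    intro j ω
    rw [hpt j ω]
    rfl
  have happ : ∀ ω, (Fin.append (fun j => p j ω) (fun j => pt j ω)) =
      ConformalPRDS.Vec n m N s (Z ω) := by
    intro ω
    funext l
    refine Fin.addCases (fun j => ?_) (fun j => ?_) l
    · simp only [ConformalPRDS.Vec, Fin.append_left]
      exact h_pj j ω
    · simp only [ConformalPRDS.Vec, Fin.append_right]
      exact h_ptj j ω
  have eA : {ω | (fun ω => Fin.append (fun j => p j ω) (fun j => pt j ω)) ω ∈ A} =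
      Z ⁻¹' {θ | ConformalPRDS.Vec n m N s θ ∈ A} := by
    ext ω
    simp only [Set.mem_setOf_eq, Set.mem_preimage, happ ω]
  have ex : ∀ z : ℝ, {ω | p k ω ≤ z} = Z ⁻¹' {θ | ConformalPRDS.Pv n m N s k θ ≤ z} := by
    intro z
    ext ω
    simp only [Set.mem_setOf_eq, Set.mem_preimage, h_pj k ω]
  have hPvm : ∀ z : ℝ, MeasurableSet {θ : (Fin n ⊕ Fin m → 𝓧) × (Fin N → 𝓧) |
      ConformalPRDS.Pv n m N s k θ ≤ z} := fun z =>
    measurableSet_le (ConformalPRDS.measurable_Pv hs k) measurable_const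
  have hAm : MeasurableSet {θ : (Fin n ⊕ Fin m → 𝓧) × (Fin N → 𝓧) |
      ConformalPRDS.Vec n m N s θ ∈ A} := ConformalPRDS.measurableSet_vec_mem hs A
  have hmap : ∀ (S : Set ((Fin n ⊕ Fin m → 𝓧) × (Fin N → 𝓧))), MeasurableSet S →
      μ (Z ⁻¹' S) = ν S := fun S hS => (Measure.map_apply hZ hS).symm
  rw [eA, ex x, ex y, ← Set.preimage_inter, ← Set.preimage_inter,
    hmap _ (hAm.inter (hPvm x)), hmap _ (hAm.inter (hPvm y)), hmap _ (hPvm x), hmap _ (hPvm y)]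
  have hposν : 0 < ν {θ | ConformalPRDS.Pv n m N s k θ ≤ x} := by
    rw [ex x, hmap _ (hPvm x)] at hpos
    exact hpos
  exact ConformalPRDS.aux_prds hs ν hswap hdistν A hA hxy hposν

end
end

section
/- Fix α ∈ (0,1) and ε ≥ 0, set c = α/(α+ε), and for p-values p_j, p̃_j ∈ [0,1] define v_j = p_j ∧ (p̃_j ∨ (c·p_j)) for j ∈ [m]. Then for every j ∈ [m] and every k ∈ [m], the SynthBH step-k condition p̃_j^{kε/m} ≤ αk/m holds if and only if v_j ≤ αk/m. Consequently, the SynthBH rejection index satisfies k* = max{k ∈ [m] : v_{(k)} ≤ αk/m} (with k* = 0 if no such k), where v_{(k)} is the k-th smallest of (v_j)_{j∈[m]}, and the SynthBH rejection set equals the Benjamini–Hochberg rejection set at level α applied to (v_j)_{j∈[m]}, rejecting all j with v_j ≤ v_{(k*)}. -/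
noncomputable section

/-- The Benjamini–Hochberg rejection index at level `α` applied to values `v`:
`k*_BH = max {k ∈ [m] : v_{(k)} ≤ αk/m}` (0 if none). -/
def bhIndex (m : ℕ) (α : ℝ) (v : Fin m → ℝ) : ℕ :=
  ((Finset.Icc 1 m).filter (fun k => kthSmallest v k ≤ α * k / m)).sup id

/-- The Benjamini–Hochberg rejection set at level `α` applied to values `v`:
rejects all `j` with `v_j ≤ v_{(k*_BH)}` (∅ if `k*_BH = 0`). -/
def bhRejSet (m : ℕ) (α : ℝ) (v : Fin m → ℝ) : Finset (Fin m) :=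
  if bhIndex m α v = 0 then ∅
  else Finset.univ.filter (fun j => v j ≤ kthSmallest v (bhIndex m α v))

/- auxiliary lemmas -/

lemma sortedGetDLeIff (t : ℝ) :
    ∀ (L : List ℝ), L.Pairwise (· ≤ ·) → ∀ i, i < L.length →
      (L.getD i 0 ≤ t ↔ i < L.countP fun x => decide (x ≤ t)) := by
  intro L
  induction L with
  | nil => intro _ i hi; simp at hi
  | cons a l ih =>
    intro hs i hi
    rw [List.pairwise_cons] at hs
    obtain ⟨ha, hl⟩ := hs
    have hcnt0 : ¬ (a ≤ t) → l.countP (fun x => decide (x ≤ t)) = 0 := by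
      intro h
      rw [List.countP_eq_zero]
      intro x hx
      simp only [decide_eq_true_eq]
      intro hxt
      exact h (le_trans (ha x hx) hxt)
    match i with
    | 0 =>
      simp only [List.getD_cons_zero, List.countP_cons]
      by_cases h : a ≤ t
      · simp [h]
      · simp [h, hcnt0 h]
    | Nat.succ i =>
      simp only [List.getD_cons_succ, List.countP_cons]
      have hi' : i < l.length := by simpa using hi
      by_cases h : a ≤ t
      · simp only [h, decide_true, if_true]
        rw [ih hl i hi']
        omega
      · have hmem : l.getD i 0 ∈ l := by
          rw [List.getD_eq_getElem _ _ hi']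
          exact List.getElem_mem _
        constructor
        · intro hle
          exact absurd (le_trans (ha _ hmem) hle) h
        · intro hlt
          simp [h, hcnt0 h] at hlt

lemma countPOfFnEq {m : ℕ} (w : Fin m → ℝ) (t : ℝ) :
    ((List.ofFn w).countP fun x => decide (x ≤ t)) = (Finset.univ.filter fun j => w j ≤ t).card := by
  rw [List.ofFn_eq_map, List.countP_map]
  have : (Finset.univ.filter fun j => w j ≤ t).card
      = Multiset.countP (fun j => w j ≤ t) (Finset.univ : Finset (Fin m)).val := by
    rw [Multiset.countP_eq_card_filter]; rfl
  rw [this, Fin.univ_def]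
  exact (Multiset.coe_countP _ _).symm

lemma kthSmallestLeIff {m : ℕ} (w : Fin m → ℝ) (k : ℕ) (hk1 : 1 ≤ k) (hkm : k ≤ m) (t : ℝ) :
    kthSmallest w k ≤ t ↔ k ≤ (Finset.univ.filter fun j => w j ≤ t).card := by
  set L := List.insertionSort (· ≤ ·) (List.ofFn w) with hL
  have hsort : L.Pairwise (· ≤ ·) := List.pairwise_insertionSort _ _
  have hlen : L.length = m := by
    rw [hL, (List.perm_insertionSort _ _).length_eq, List.length_ofFn]
  have hcnt : (L.countP fun x => decide (x ≤ t)) = (Finset.univ.filter fun j => w j ≤ t).card := by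
    rw [hL, (List.perm_insertionSort _ _).countP_eq, countPOfFnEq]
  have hlt : k - 1 < L.length := by omega
  rw [kthSmallest, ← hL, sortedGetDLeIff t L hsort _ hlt, hcnt]
  omega

lemma spMinIff (α ε P Pt δ t : ℝ) (hα : 0 < α) (hsum : 0 < α + ε) (hδt : α * δ = ε * t) :
    (min P (max Pt (P - δ)) ≤ t ↔ min P (max Pt (α / (α + ε) * P)) ≤ t) := by
  have key : P - δ ≤ t ↔ α / (α + ε) * P ≤ t := by
    rw [div_mul_eq_mul_div, div_le_iff₀ hsum]
    constructor <;> intro h <;> nlinarith [mul_le_mul_of_nonneg_left h hα.le]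
  simp only [min_le_iff, max_le_iff]
  tauto

/-- **Static reduction of SynthBH to BH.**  With `c = α/(α+ε)` and
`v_j = p_j ∧ (p̃_j ∨ (c·p_j))`: for every `j` and every `k ∈ [m]`, the step-`k`
condition `p̃_j^{kε/m} ≤ αk/m` holds iff `v_j ≤ αk/m`; consequently the SynthBH
rejection index equals `max {k ∈ [m] : v_{(k)} ≤ αk/m}` and the SynthBH rejection set
coincides with the BH rejection set at level `α` applied to `(v_j)`. -/
theorem synthBH_static_reduction
    (m : ℕ) (hm : 0 < m) (α ε : ℝ) (hα : α ∈ Set.Ioo (0 : ℝ) 1) (hε : 0 ≤ ε)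
    (p pt : Fin m → ℝ)
    (hp : ∀ j, p j ∈ Set.Icc (0 : ℝ) 1) (hpt : ∀ j, pt j ∈ Set.Icc (0 : ℝ) 1) :
    (∀ j, ∀ k ∈ Finset.Icc 1 m,
      (sp (p j) (pt j) (k * ε / m) ≤ α * k / m ↔
        min (p j) (max (pt j) (α / (α + ε) * p j)) ≤ α * k / m)) ∧
    kStar m α ε p pt =
      bhIndex m α (fun j => min (p j) (max (pt j) (α / (α + ε) * p j))) ∧
    rejSet m α ε p pt =
      bhRejSet m α (fun j => min (p j) (max (pt j) (α / (α + ε) * p j))) := by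
  have hα0 : 0 < α := hα.1
  have hsum : 0 < α + ε := by linarith
  have hm0 : (0 : ℝ) < m := by exact_mod_cast hm
  set v : Fin m → ℝ := fun j => min (p j) (max (pt j) (α / (α + ε) * p j)) with hv
  -- Part 1, for all k
  have part1 : ∀ j, ∀ k : ℕ,
      (sp (p j) (pt j) (k * ε / m) ≤ α * k / m ↔ v j ≤ α * k / m) := by
    intro j k
    exact spMinIff α ε (p j) (pt j) ((k : ℝ) * ε / m) (α * k / m) hα0 hsum (by ring)
  -- equality of counting sets
  have cardEq : ∀ k : ℕ,
      (Finset.univ.filter fun j => spVec m ε p pt k j ≤ α * k / m).card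
        = (Finset.univ.filter fun j => v j ≤ α * k / m).card := by
    intro k
    congr 1
    apply Finset.filter_congr
    intro j _
    exact part1 j k
  -- equivalence of the step-k conditions
  have condIff : ∀ k ∈ Finset.Icc 1 m,
      ((m : ℝ) * kthSmallest (spVec m ε p pt k) k / k ≤ α ↔
        kthSmallest v k ≤ α * k / m) := by
    intro k hk
    rw [Finset.mem_Icc] at hk
    have hk0 : (0 : ℝ) < k := by exact_mod_cast hk.1
    have stepA : (m : ℝ) * kthSmallest (spVec m ε p pt k) k / k ≤ α ↔
        kthSmallest (spVec m ε p pt k) k ≤ α * k / m := by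
      rw [div_le_iff₀ hk0, le_div_iff₀ hm0]
      constructor <;> intro h <;> nlinarith
    rw [stepA, kthSmallestLeIff _ k hk.1 hk.2, kthSmallestLeIff _ k hk.1 hk.2, cardEq k]
  -- equality of the indices
  have filterEq :
      ((Finset.Icc 1 m).filter
        (fun k => (m : ℝ) * kthSmallest (spVec m ε p pt k) k / k ≤ α)) =
      ((Finset.Icc 1 m).filter (fun k => kthSmallest v k ≤ α * k / m)) :=
    Finset.filter_congr condIff
  have hKeq : kStar m α ε p pt = bhIndex m α v := by
    rw [kStar, bhIndex, filterEq]
  refine ⟨fun j k _ => part1 j k, hKeq, ?_⟩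
  -- rejection sets
  set K := bhIndex m α v with hK
  by_cases hK0 : K = 0
  · rw [rejSet, bhRejSet, hKeq, ← hK, if_pos hK0, if_pos hK0]
  · -- K ∈ the BH filter
    set S := (Finset.Icc 1 m).filter (fun k => kthSmallest v k ≤ α * k / m) with hS
    have hSne : S.Nonempty := by
      by_contra h
      rw [Finset.not_nonempty_iff_eq_empty] at h
      apply hK0
      rw [hK, bhIndex, ← hS, h, Finset.sup_empty]
      rfl
    have hKS : K ∈ S := by
      obtain ⟨b, hb, hEq⟩ := Finset.exists_mem_eq_sup S hSne id
      have : K = b := by rw [hK, bhIndex, ← hS, hEq]; rfl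
      rwa [this]
    rw [hS, Finset.mem_filter, Finset.mem_Icc] at hKS
    obtain ⟨⟨hK1, hKm⟩, hKcond⟩ := hKS
    have hmax : ∀ k ∈ S, k ≤ K := fun k hk => Finset.le_sup (f := id) hk
    -- the v-filter at level K has at most K elements
    have hcard : (Finset.univ.filter fun j => v j ≤ α * K / m).card ≤ K := by
      by_contra h
      push_neg at h
      by_cases hKem : K = m
      · have : (Finset.univ.filter fun j => v j ≤ α * K / m).card ≤ m := by
          calc _ ≤ (Finset.univ : Finset (Fin m)).card := Finset.card_filter_le _ _
          _ = m := by simp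
        omega
      · have hK1m : K + 1 ≤ m := by omega
        have hle : α * (K : ℝ) / m ≤ α * ((K + 1 : ℕ) : ℝ) / m := by
          push_cast
          gcongr
          linarith
        have hsub : (Finset.univ.filter fun j => v j ≤ α * K / m) ⊆
            (Finset.univ.filter fun j => v j ≤ α * (K + 1 : ℕ) / m) := by
          intro j hj
          rw [Finset.mem_filter] at hj ⊢
          exact ⟨hj.1, le_trans hj.2 hle⟩
        have hcard1 : K + 1 ≤ (Finset.univ.filter fun j => v j ≤ α * (K + 1 : ℕ) / m).card :=
          le_trans (by omega) (Finset.card_le_card hsub)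
        have hmem : K + 1 ∈ S := by
          rw [hS, Finset.mem_filter, Finset.mem_Icc]
          refine ⟨⟨by omega, hK1m⟩, ?_⟩
          rw [kthSmallestLeIff _ (K + 1) (by omega) hK1m]
          exact hcard1
        have := hmax (K + 1) hmem
        omega
    -- transfer: kth smallest of spVec at K is below the threshold
    have hKspcond : kthSmallest (spVec m ε p pt K) K ≤ α * K / m := by
      rw [kthSmallestLeIff _ K hK1 hKm, cardEq K]
      rw [kthSmallestLeIff _ K hK1 hKm] at hKcond
      exact hKcond
    -- generic lemma: for w with per-coordinate equivalence, thresholding at kth = thresholding at αK/m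
    have keyGen : ∀ (w : Fin m → ℝ),
        kthSmallest w K ≤ α * K / m →
        ((Finset.univ.filter fun j => w j ≤ α * K / m).card ≤ K) →
        ∀ j, (w j ≤ kthSmallest w K ↔ w j ≤ α * K / m) := by
      intro w hwk hwcard j
      constructor
      · intro h; exact le_trans h hwk
      · intro h
        by_contra hnj
        have hS1 : K ≤ (Finset.univ.filter fun i => w i ≤ kthSmallest w K).card := by
          rw [← kthSmallestLeIff _ K hK1 hKm]
        have hsub : insert j (Finset.univ.filter fun i => w i ≤ kthSmallest w K) ⊆
            (Finset.univ.filter fun i => w i ≤ α * K / m) := by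
          intro i hi
          rw [Finset.mem_insert] at hi
          rw [Finset.mem_filter]
          rcases hi with rfl | hi
          · exact ⟨Finset.mem_univ _, h⟩
          · rw [Finset.mem_filter] at hi
            exact ⟨Finset.mem_univ _, le_trans hi.2 hwk⟩
        have hjn : j ∉ (Finset.univ.filter fun i => w i ≤ kthSmallest w K) := by
          rw [Finset.mem_filter]
          tauto
        have := Finset.card_le_card hsub
        rw [Finset.card_insert_of_notMem hjn] at this
        omega
    have hspcard : (Finset.univ.filter fun j => spVec m ε p pt K j ≤ α * K / m).card ≤ K := by
      rw [cardEq K]; exact hcard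
    have hspIff := keyGen (spVec m ε p pt K) hKspcond hspcard
    have hvIff := keyGen v hKcond hcard
    have hkstar0 : kStar m α ε p pt ≠ 0 := by rw [hKeq]; exact hK0
    rw [rejSet, bhRejSet, hKeq, ← hK, if_neg hK0, if_neg hK0]
    apply Finset.filter_congr
    intro j _
    rw [hspIff j, hvIff j]
    exact (part1 j K).trans Iff.rfl

end
end
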